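/- arXiv:2208.08578 — 9 statements merged into one kernel-verified Lean document; each statement's English description precedes it below -/
import Mathlib

section
/- Let q be a power of 2, let f : F_q → F_q be a function with f(0) = 0 such that for every u ∈ F_q*, the map x ↦ f(x) + u·x is 2-to-1. Fix v ∈ F_q \ {f(x) + x : x ∈ F_q}. For u₁, u₂ ∈ F_q*, the number of solutions x ∈ F_q of u₁·f(x) + u₂·x + u₂·v = 0 is either 0 or 2. -/
open Finset

lemma filter_mul_add_mul_add_eq_zero {F : Type*} [Field F] [DecidableEq F] (s : Finset F)
    (f : F → F) {a : F} (ha : a ≠ 0) (b c : F) :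
    s.filter (fun x => a * f x + b * x + c = 0) =
      s.filter (fun x => f x + b / a * x = -(c / a)) := by
  refine filter_congr fun x _ => ?_
  have hscale : a * (f x + b / a * x + c / a) = a * f x + b * x + c := by field_simp
  rw [eq_neg_iff_add_eq_zero, ← hscale, mul_eq_zero_iff_left ha]

theorem stmt1_general {F : Type*} [Field F] [Fintype F] [DecidableEq F]
    (f : F → F)
    (h2to1 : ∀ u : F, u ≠ 0 → ∀ y : F,
      (Finset.univ.filter (fun x : F => f x + u * x = y)).card = 0 ∨
      (Finset.univ.filter (fun x : F => f x + u * x = y)).card = 2)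
    (v : F)
    (u₁ u₂ : F) (hu₁ : u₁ ≠ 0) (hu₂ : u₂ ≠ 0) :
    (Finset.univ.filter (fun x : F => u₁ * f x + u₂ * x + u₂ * v = 0)).card = 0 ∨
    (Finset.univ.filter (fun x : F => u₁ * f x + u₂ * x + u₂ * v = 0)).card = 2 := by
  rw [filter_mul_add_mul_add_eq_zero _ f hu₁]
  exact h2to1 _ (div_ne_zero hu₂ hu₁) _

/-- with f an o-polynomial function and v outside {f(x)+x}, for
u₁, u₂ ≠ 0 the equation u₁·f(x) + u₂·x + u₂·v = 0 has 0 or 2 solutions. -/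
theorem stmt1 {F : Type*} [Field F] [Fintype F] [DecidableEq F] (m : ℕ)
    (hq : Fintype.card F = 2 ^ m)
    (f : F → F) (hf0 : f 0 = 0)
    (h2to1 : ∀ u : F, u ≠ 0 → ∀ y : F,
      (Finset.univ.filter (fun x : F => f x + u * x = y)).card = 0 ∨
      (Finset.univ.filter (fun x : F => f x + u * x = y)).card = 2)
    (v : F) (hv : v ∉ {y : F | ∃ x : F, f x + x = y})
    (u₁ u₂ : F) (hu₁ : u₁ ≠ 0) (hu₂ : u₂ ≠ 0) :
    (Finset.univ.filter (fun x : F => u₁ * f x + u₂ * x + u₂ * v = 0)).card = 0 ∨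
    (Finset.univ.filter (fun x : F => u₁ * f x + u₂ * x + u₂ * v = 0)).card = 2 :=
  stmt1_general f h2to1 v u₁ u₂ hu₁ hu₂
end

section
/- Let q be a power of 2, let f : F_q → F_q be a bijection with f(0) = 0 such that for every u ∈ F_q*, the map x ↦ f(x) + u·x is 2-to-1. Fix v ∈ F_q \ {f(x) + x : x ∈ F_q}. Then the number of pairs (u₁, u₂) ∈ F_q* × F_q* for which the equation u₁·f(x) + u₂·x + u₂·v = 0 has exactly two solutions in F_q equals (q−1)(q−2)/2. -/
open Finset

/-- the number of pairs (u₁,u₂) ∈ F_q* × F_q* for which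
u₁·f(x) + u₂·x + u₂·v = 0 has exactly two solutions equals (q−1)(q−2)/2. -/
theorem stmt2 {F : Type*} [Field F] [Fintype F] [DecidableEq F] (m : ℕ)
    (hq : Fintype.card F = 2 ^ m)
    (f : F → F) (hbij : Function.Bijective f) (hf0 : f 0 = 0)
    (h2to1 : ∀ u : F, u ≠ 0 → ∀ y : F,
      (Finset.univ.filter (fun x : F => f x + u * x = y)).card = 0 ∨
      (Finset.univ.filter (fun x : F => f x + u * x = y)).card = 2)
    (v : F) (hv : v ∉ {y : F | ∃ x : F, f x + x = y}) :
    (Finset.univ.filter (fun u : F × F => u.1 ≠ 0 ∧ u.2 ≠ 0 ∧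
        (Finset.univ.filter (fun x : F => u.1 * f x + u.2 * x + u.2 * v = 0)).card = 2)).card
      = (Fintype.card F - 1) * (Fintype.card F - 2) / 2 := by
  classical
  set q := Fintype.card F with hqdef
  have hv0 : v ≠ 0 := by
    intro h; exact hv ⟨0, by simp [hf0, h]⟩
  have hm : m ≠ 0 := by
    intro h
    have h1 : 1 < q := Fintype.one_lt_card
    rw [hq, h] at h1; omega
  have htwo : (2 : F) = 0 := by
    have h := FiniteField.cast_card_eq_zero F
    rw [← hqdef, hq] at h
    have h2 : ((2 : F)) ^ m = 0 := by push_cast at h; exact_mod_cast h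
    exact pow_eq_zero_iff hm |>.mp h2
  have hfne : ∀ x : F, x ≠ 0 → f x ≠ 0 := fun x hx h =>
    hx (hbij.1 (h.trans hf0.symm))
  set D : Finset F := Finset.univ.filter (fun x : F => x ≠ 0 ∧ x ≠ v) with hD
  set g : F → F := fun x => f x / (x + v) with hg
  have hxvne : ∀ x : F, x ≠ v → x + v ≠ 0 := by
    intro x hx h
    exact hx (by linear_combination h - v * htwo)
  -- key equivalence
  have hkey : ∀ u : F, u ≠ 0 → ∀ x : F,
      (f x + u * x = u * v) ↔ (x ∈ D ∧ g x = u) := by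
    intro u hu x
    constructor
    · intro h
      have hx0 : x ≠ 0 := by
        rintro rfl
        apply mul_ne_zero hu hv0
        linear_combination -h + hf0
      have hxv : x ≠ v := by
        rintro rfl
        have hfv : f x = 0 := by linear_combination h
        exact hv0 (hbij.1 (hfv.trans hf0.symm))
      have hs : x + v ≠ 0 := hxvne x hxv
      refine ⟨by simp [hD, hx0, hxv], ?_⟩
      rw [hg]
      rw [div_eq_iff hs]
      linear_combination h - u * x * htwo
    · rintro ⟨hxD, hgx⟩
      simp only [hD, mem_filter, mem_univ, true_and] at hxD
      have hs : x + v ≠ 0 := hxvne x hxD.2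
      rw [hg, div_eq_iff hs] at hgx
      linear_combination hgx + u * x * htwo
  have hgne : ∀ x ∈ D, g x ≠ 0 := by
    intro x hxD
    simp only [hD, mem_filter, mem_univ, true_and] at hxD
    exact div_ne_zero (hfne x hxD.1) (hxvne x hxD.2)
  -- solution-set equality
  have hTset : ∀ u : F, u ≠ 0 →
      (Finset.univ.filter (fun x : F => f x + u * x = u * v))
        = D.filter (fun x => g x = u) := by
    intro u hu
    ext x
    simp only [mem_filter, mem_univ, true_and]
    rw [hkey u hu x, mem_filter]
  set T : Finset F := Finset.univ.filter (fun u : F => u ≠ 0 ∧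
      (Finset.univ.filter (fun x : F => f x + u * x = u * v)).card = 2) with hT
  have hTimage : T = D.image g := by
    ext u
    simp only [hT, mem_filter, mem_univ, true_and, mem_image]
    constructor
    · rintro ⟨hu, hcard⟩
      have hne : (Finset.univ.filter (fun x : F => f x + u * x = u * v)).Nonempty := by
        rw [← card_pos, hcard]; norm_num
      obtain ⟨x, hx⟩ := hne
      simp only [mem_filter, mem_univ, true_and] at hx
      obtain ⟨hxD, hgx⟩ := (hkey u hu x).mp hx
      exact ⟨x, hxD, hgx⟩
    · rintro ⟨x, hxD, rfl⟩
      have hu : g x ≠ 0 := hgne x hxD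
      refine ⟨hu, ?_⟩
      rcases h2to1 (g x) hu (g x * v) with h0 | h2
      · exfalso
        have hx : f x + g x * x = g x * v := (hkey (g x) hu x).mpr ⟨hxD, rfl⟩
        have : x ∈ (Finset.univ.filter (fun x' : F => f x' + g x * x' = g x * v)) := by
          simp [hx]
        rw [card_eq_zero] at h0
        simp [h0] at this
      · exact h2
  -- cardinality of D
  have hDcard : D.card = q - 2 := by
    have hDeq : D = Finset.univ \ {0, v} := by
      ext x
      simp only [hD, mem_filter, mem_univ, true_and, mem_sdiff, mem_insert,
        mem_singleton]
      tauto
    rw [hDeq, card_sdiff_of_subset (subset_univ _)]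
    have : ({0, v} : Finset F).card = 2 := by
      rw [card_insert_of_notMem (by simpa using hv0.symm), card_singleton]
    rw [this, card_univ]
  -- T has (q-2)/2 elements
  have hTcard2 : 2 * T.card = q - 2 := by
    have hsum := Finset.card_eq_sum_card_image g D
    rw [← hTimage] at hsum
    have hterm : ∀ u ∈ T, (D.filter (fun x => g x = u)).card = 2 := by
      intro u hu
      simp only [hT, mem_filter, mem_univ, true_and] at hu
      rw [← hTset u hu.1]
      exact hu.2
    rw [Finset.sum_congr rfl hterm, Finset.sum_const, smul_eq_mul] at hsum
    rw [← hDcard, hsum, mul_comm]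
  -- bijection with U ×ˢ T
  set U : Finset F := Finset.univ.filter (fun a : F => a ≠ 0) with hU
  have hUcard : U.card = q - 1 := by
    have : U = Finset.univ \ {0} := by
      ext x; simp [hU]
    rw [this, card_sdiff_of_subset (subset_univ _), card_singleton, card_univ]
  -- equation set rewriting
  have hEq : ∀ u₁ u₂ : F, u₁ ≠ 0 →
      (Finset.univ.filter (fun x : F => u₁ * f x + u₂ * x + u₂ * v = 0))
        = (Finset.univ.filter (fun x : F => f x + (u₂ / u₁) * x = (u₂ / u₁) * v)) := by
    intro u₁ u₂ h1
    ext x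
    simp only [mem_filter, mem_univ, true_and]
    have hc : u₁ * (u₂ / u₁) = u₂ := by field_simp
    constructor <;> intro h
    · apply (mul_right_inj' h1).mp
      linear_combination h + (x - v) * hc - u₂ * v * htwo
    · have h' := (mul_right_inj' h1).mpr h
      linear_combination h' + (v - x) * hc + v * u₂ * htwo
  -- the bijection
  have hScard :
      (Finset.univ.filter (fun u : F × F => u.1 ≠ 0 ∧ u.2 ≠ 0 ∧
        (Finset.univ.filter (fun x : F => u.1 * f x + u.2 * x + u.2 * v = 0)).card = 2)).card
      = (U ×ˢ T).card := by
    refine Finset.card_bij' (fun p _ => (p.1, p.2 / p.1)) (fun p _ => (p.1, p.2 * p.1))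
      ?_ ?_ ?_ ?_
    · intro p hp
      simp only [mem_filter, mem_univ, true_and] at hp
      obtain ⟨h1, h2, hcard⟩ := hp
      rw [Finset.mem_product]
      constructor
      · simp [hU, h1]
      · simp only [hT, mem_filter, mem_univ, true_and]
        refine ⟨div_ne_zero h2 h1, ?_⟩
        rw [hEq p.1 p.2 h1] at hcard
        exact hcard
    · intro p hp
      rw [Finset.mem_product] at hp
      simp only [hU, hT, mem_filter, mem_univ, true_and] at hp
      obtain ⟨ha, hu, hcard⟩ := hp
      simp only [mem_filter, mem_univ, true_and]
      refine ⟨ha, mul_ne_zero hu ha, ?_⟩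
      rw [hEq p.1 (p.2 * p.1) ha]
      have he : p.2 * p.1 / p.1 = p.2 := by field_simp
      rw [he]
      exact hcard
    · rintro ⟨a, b⟩ hp
      simp only [mem_filter, mem_univ, true_and] at hp
      simp [div_mul_cancel₀ b hp.1]
    · rintro ⟨a, b⟩ hp
      rw [Finset.mem_product] at hp
      simp only [hU, mem_filter, mem_univ, true_and] at hp
      simp [mul_div_cancel_right₀ b hp.1]
  rw [hScard, Finset.card_product, hUcard]
  have hTc : T.card = (q - 2) / 2 := by omega
  have hdvd : 2 ∣ q - 2 := by
    have h2q : 2 ∣ q := hq ▸ dvd_pow_self 2 hm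
    have h1 : 1 < q := Fintype.one_lt_card
    omega
  rw [hTc, Nat.mul_div_assoc _ hdvd]
end

section
/- Let q be an odd prime power and w ∈ F_q with η(w) = −1, where η is the quadratic character. Then the number of pairs (u₁, u₂) ∈ F_q* × F_q* such that u₁·x² + u₂·x + u₂·w = 0 has exactly two distinct solutions x ∈ F_q equals (q−1)(q−3)/2. -/
/-!
For `u₁, u₂ ≠ 0` the equation has two roots iff its discriminant `u₂² - 4u₁u₂w` is a nonzero
square. For fixed `u₂ ≠ 0`, the map `u₁ ↦ u₂² - 4u₁u₂w` is an affine bijection of `F` sending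
`u₁ = 0` to the square `u₂²`, so exactly `(q - 1)/2 - 1` values of `u₁` qualify;
summing over the `q - 1` values of `u₂` gives `(q - 1)(q - 3)/2`.
-/

open Finset

section

variable {F : Type*} [Field F] [Fintype F] [DecidableEq F]

/-- The roots of `a x² + b x + c` correspond to the square roots of its discriminant
via `x ↦ 2ax + b`. -/
theorem card_quadratic_roots (hF : ringChar F ≠ 2) {a : F} (ha : a ≠ 0) (b c : F) :
    (#{x | a * x ^ 2 + b * x + c = 0} : ℤ) = quadraticChar F (discrim a b c) + 1 := by
  have : NeZero (2 : F) := ⟨Ring.two_ne_zero hF⟩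
  rw [← quadraticChar_card_sqrts hF, Set.toFinset_ofPred,
    card_equiv ((Equiv.mulLeft₀ (2 * a) (mul_ne_zero two_ne_zero ha)).trans (Equiv.addRight b))]
  intro x
  rw [mem_filter_univ, mem_filter_univ, sq x, quadratic_eq_zero_iff_discrim_eq_sq ha, eq_comm]
  rfl

theorem card_quadratic_roots_eq_two_iff (hF : ringChar F ≠ 2) {a : F} (ha : a ≠ 0) (b c : F) :
    #{x | a * x ^ 2 + b * x + c = 0} = 2 ↔ quadraticChar F (discrim a b c) = 1 := by
  have h := card_quadratic_roots hF ha b c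
  omega

/-- Squaring is two-to-one from `Fˣ` onto the nonzero squares. -/
theorem two_mul_card_quadraticChar_eq_one (hF : ringChar F ≠ 2) :
    2 * #{x : F | quadraticChar F x = 1} = Fintype.card F - 1 := by
  have hfiber : ∀ a ∈ ({x : F | quadraticChar F x = 1} : Finset F),
      #{x ∈ univ.erase 0 | x ^ 2 = a} = 2 := by
    intro a ha
    have ha : quadraticChar F a = 1 := (mem_filter_univ a).mp ha
    have hsqrts := quadraticChar_card_sqrts hF a
    rw [ha, Set.toFinset_ofPred] at hsqrts
    rw [filter_erase, erase_eq_of_notMem]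
    · exact_mod_cast hsqrts
    · have ha0 : a ≠ 0 := by rintro rfl; simp at ha
      simpa [eq_comm] using ha0
  rw [← card_univ, ← card_erase_of_mem (mem_univ 0),
    card_eq_sum_card_fiberwise (f := (· ^ 2)) (s := univ.erase 0)
      (t := {x | quadraticChar F x = 1})
      (fun x hx => mem_filter_univ _ |>.mpr (quadraticChar_sq_one' (ne_of_mem_erase hx))),
    sum_congr rfl hfiber, sum_const, smul_eq_mul, mul_comm]

theorem card_ne_zero_quadraticChar_mul_add_eq_one {α β : F} (hα : α ≠ 0)
    (hβ : quadraticChar F β = 1) :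
    #{x : F | x ≠ 0 ∧ quadraticChar F (α * x + β) = 1} =
      #{y : F | quadraticChar F y = 1} - 1 := by
  rw [← card_erase_of_mem (mem_filter_univ β |>.mpr hβ),
    card_equiv ((Equiv.mulLeft₀ α hα).trans (Equiv.addRight β))]
  intro x
  simp [hα]

theorem card_ne_zero_card_roots_eq_two (hF : ringChar F ≠ 2) {w y : F} (hw : w ≠ 0)
    (hy : y ≠ 0) :
    #{x : F | x ≠ 0 ∧ #{z | x * z ^ 2 + y * z + y * w = 0} = 2} =
      #{d : F | quadraticChar F d = 1} - 1 := by
  have h4 : (4 : F) ≠ 0 := by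
    rw [show (4 : F) = 2 * 2 by norm_num]
    exact mul_ne_zero (Ring.two_ne_zero hF) (Ring.two_ne_zero hF)
  have hα : -(4 * y * w) ≠ 0 := by simp [h4, hy, hw]
  rw [← card_ne_zero_quadraticChar_mul_add_eq_one hα (quadraticChar_sq_one' hy)]
  refine congrArg card (filter_congr fun x _ => and_congr_right fun hx => ?_)
  rw [card_quadratic_roots_eq_two_iff hF hx,
    show discrim x y (y * w) = -(4 * y * w) * x + y ^ 2 by rw [discrim]; ring]

end

/-- if η(w) = −1, the number of pairs (u₁,u₂) ∈ F_q* × F_q* such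
that u₁·x² + u₂·x + u₂·w = 0 has exactly two distinct solutions equals
(q−1)(q−3)/2. -/
theorem stmt10 {F : Type*} [Field F] [Fintype F] [DecidableEq F]
    (hq : Odd (Fintype.card F)) (w : F) (hw : quadraticChar F w = -1) :
    (Finset.univ.filter (fun u : F × F => u.1 ≠ 0 ∧ u.2 ≠ 0 ∧
        (Finset.univ.filter (fun x : F => u.1 * x ^ 2 + u.2 * x + u.2 * w = 0)).card = 2)).card
      = (Fintype.card F - 1) * (Fintype.card F - 3) / 2 := by
  have hF : ringChar F ≠ 2 := fun h => by
    have := FiniteField.even_card_of_char_two h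
    rw [Nat.odd_iff] at hq
    omega
  have hw0 : w ≠ 0 := by rintro rfl; simp at hw
  have hfiber : ∀ y ∈ univ.erase (0 : F),
      #{x : F | x ≠ 0 ∧ y ≠ 0 ∧ #{z | x * z ^ 2 + y * z + y * w = 0} = 2} =
        #{d : F | quadraticChar F d = 1} - 1 := fun y hy => by
    simpa only [ne_eq, ne_of_mem_erase hy, not_false_eq_true, true_and] using
      card_ne_zero_card_roots_eq_two hF hw0 (ne_of_mem_erase hy)
  have hcard := two_mul_card_quadraticChar_eq_one hF
  rw [card_filter, Fintype.sum_prod_type_right]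
  simp only [← card_filter]
  rw [← sum_erase (a := 0) _ (by simp), sum_congr rfl hfiber, sum_const,
    card_erase_of_mem (mem_univ 0), card_univ, smul_eq_mul,
    show Fintype.card F - 3 = 2 * (#{d : F | quadraticChar F d = 1} - 1) by omega,
    Nat.mul_left_comm, Nat.mul_div_cancel_left _ two_pos]
end

section
/- Let q be an odd prime power and w ∈ F_q with η(w) = −1, where η is the quadratic character. Then the number of pairs (u₁, u₂) ∈ F_q* × F_q* such that u₁·x² + u₂·x − u₁·w = 0 has exactly two distinct solutions x ∈ F_q equals (q−1)(q − 2 + η(−1))/2. -/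
/-!
For `u₁ ≠ 0` the equation has `η(disc) + 1` roots, and `disc = u₁² ((u₂/u₁)² + 4w)`, so the count
factorises as `(q - 1) N` with `N = #{t | η(t² + 4w) = 1}`; the condition `u₂ ≠ 0` is automatic
because `η(4u₁²w) = η(w) = -1`. Since `2·[η(a) = 1] = [a ≠ 0] + η(a)`, we get
`2N = #{t | t² ≠ -4w} + ∑ₜ η(t² + 4w)`. The character sum is `-1` because the hyperbola
`y² - t² = 4w` has `q - 1` points, and `t² = -4w` has `1 + η(-4w) = 1 - η(-1)` solutions.
-/

open Finset

namespace QuadraticCount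

variable {F : Type*} [Field F] [Fintype F]

lemma ringChar_ne_two_of_odd_card (hq : Odd (Fintype.card F)) : ringChar F ≠ 2 := by
  rw [Ne, FiniteField.even_card_iff_char_two, ← Nat.even_iff, Nat.not_even_iff_odd]
  exact hq

variable [DecidableEq F]

lemma card_sqrts (hF : ringChar F ≠ 2) (a : F) :
    (#{x : F | x ^ 2 = a} : ℤ) = quadraticChar F a + 1 := by
  rw [← quadraticChar_card_sqrts hF a, Set.toFinset_ofPred]

lemma quadraticChar_sq_mul {a : F} (ha : a ≠ 0) (b : F) :
    quadraticChar F (a ^ 2 * b) = quadraticChar F b := by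
  rw [map_mul, quadraticChar_sq_one' ha, one_mul]

/-- `x ↦ 2 a x + b` maps the roots bijectively onto the square roots of the discriminant. -/
lemma card_quadratic_roots (hF : ringChar F ≠ 2) {a : F} (ha : a ≠ 0) (b c : F) :
    (#{x : F | a * (x * x) + b * x + c = 0} : ℤ) = quadraticChar F (discrim a b c) + 1 := by
  have : NeZero (2 : F) := ⟨Ring.two_ne_zero hF⟩
  have h2a : 2 * a ≠ 0 := mul_ne_zero two_ne_zero ha
  rw [← card_sqrts hF]
  congr 1
  refine card_equiv ((Equiv.mulLeft₀ (2 * a) h2a).trans (Equiv.addRight b)) fun x => ?_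
  rw [mem_filter_univ, mem_filter_univ, quadratic_eq_zero_iff_discrim_eq_sq ha, eq_comm]
  rfl

lemma card_quadratic_roots_eq_two_iff (hF : ringChar F ≠ 2) {a : F} (ha : a ≠ 0) (b c : F) :
    #{x : F | a * (x * x) + b * x + c = 0} = 2 ↔ quadraticChar F (discrim a b c) = 1 := by
  have := card_quadratic_roots hF ha b c
  omega

/-- The hyperbola `y² - t² = c` is parametrised by `d = y - t ≠ 0`, with `y + t = c / d`. -/
lemma card_hyperbola (hF : ringChar F ≠ 2) {c : F} (hc : c ≠ 0) :
    #{p : F × F | p.2 ^ 2 = p.1 ^ 2 + c} = #{d : F | d ≠ 0} := by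
  have : NeZero (2 : F) := ⟨Ring.two_ne_zero hF⟩
  have hsub : ∀ p : F × F, p.2 ^ 2 = p.1 ^ 2 + c → p.2 - p.1 ≠ 0 := fun p hp h => by
    apply hc
    rw [sub_eq_zero.mp h] at hp
    linear_combination -hp
  refine card_nbij' (fun p => p.2 - p.1) (fun d => ((c / d - d) / 2, (c / d + d) / 2))
    (fun p hp => ?_) (fun d hd => ?_) (fun p hp => ?_) (fun d hd => ?_)
  · simp only [coe_filter, mem_univ, true_and, Set.mem_ofPred_eq] at hp ⊢
    exact hsub p hp
  · simp only [coe_filter, mem_univ, true_and, Set.mem_ofPred_eq] at hd ⊢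
    field_simp
    ring
  · simp only [coe_filter, mem_univ, true_and, Set.mem_ofPred_eq] at hp
    have := hsub p hp
    ext <;> field_simp <;> linear_combination -hp
  · simp only [coe_filter, mem_univ, true_and, Set.mem_ofPred_eq] at hd
    field_simp
    ring

lemma natCast_card_ne_zero : (#{a : F | a ≠ 0} : ℤ) = Fintype.card F - 1 := by
  rw [filter_ne', card_erase_of_mem (mem_univ 0), card_univ, Nat.cast_sub Fintype.card_pos,
    Nat.cast_one]

lemma sum_quadraticChar_sq_add (hF : ringChar F ≠ 2) {c : F} (hc : c ≠ 0) :
    ∑ t : F, quadraticChar F (t ^ 2 + c) = -1 := by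
  have hfib : (#{p : F × F | p.2 ^ 2 = p.1 ^ 2 + c} : ℤ)
      = ∑ t : F, (#{y : F | y ^ 2 = t ^ 2 + c} : ℤ) := by
    simp only [natCast_card_filter, Fintype.sum_prod_type]
  simp only [card_hyperbola hF hc, natCast_card_ne_zero, card_sqrts hF, sum_add_distrib,
    sum_const, card_univ, nsmul_eq_mul, mul_one] at hfib
  linarith

lemma two_mul_card_quadraticChar_eq_one {ι : Type*} [Fintype ι] (f : ι → F) :
    2 * (#{i | quadraticChar F (f i) = 1} : ℤ)
      = #{i | f i ≠ 0} + ∑ i, quadraticChar F (f i) := by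
  simp only [natCast_card_filter, mul_sum, ← sum_add_distrib]
  refine sum_congr rfl fun i _ => ?_
  by_cases h0 : f i = 0
  · simp [h0]
  · rcases quadraticChar_dichotomy h0 with h | h <;> simp [h0, h]

lemma two_mul_card_quadraticChar_sq_add_eq_one (hF : ringChar F ≠ 2) {c : F} (hc : c ≠ 0) :
    2 * (#{t : F | quadraticChar F (t ^ 2 + c) = 1} : ℤ)
      = Fintype.card F - 2 - quadraticChar F (-c) := by
  have hsplit : #{t : F | t ^ 2 + c ≠ 0} + #{t : F | t ^ 2 = -c} = Fintype.card F := by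
    simp only [Ne, add_eq_zero_iff_eq_neg]
    rw [add_comm, card_filter_add_card_filter_not, card_univ]
  have := card_sqrts hF (-c)
  rw [two_mul_card_quadraticChar_eq_one, sum_quadraticChar_sq_add hF hc]
  omega

lemma ne_zero_and_card_roots_eq_two_iff (hF : ringChar F ≠ 2) {w : F} (hw : quadraticChar F w = -1)
    {a : F} (ha : a ≠ 0) (b : F) :
    (b ≠ 0 ∧ #{x : F | a * x ^ 2 + b * x - a * w = 0} = 2)
      ↔ quadraticChar F ((b / a) ^ 2 + 4 * w) = 1 := by
  have hdiscrim : discrim a b (-(a * w)) = a ^ 2 * ((b / a) ^ 2 + 4 * w) := by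
    rw [discrim]
    field_simp
    ring
  have hroots : #{x : F | a * x ^ 2 + b * x - a * w = 0} = 2
      ↔ quadraticChar F ((b / a) ^ 2 + 4 * w) = 1 := by
    have hform (x : F) : a * x ^ 2 + b * x - a * w = a * (x * x) + b * x + -(a * w) := by ring
    simp only [hform]
    rw [card_quadratic_roots_eq_two_iff hF ha, hdiscrim, quadraticChar_sq_mul ha]
  refine ⟨fun h => hroots.mp h.2, fun h => ⟨fun hb => ?_, hroots.mpr h⟩⟩
  have h4 : (4 : F) = 2 ^ 2 := by norm_num
  rw [hb, zero_div, zero_pow two_ne_zero, zero_add, h4, quadraticChar_sq_mul, hw] at h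
  · norm_num at h
  · exact Ring.two_ne_zero hF

lemma card_filter_fst_ne_zero_and_div (P : F → Prop) [DecidablePred P] :
    #{u : F × F | u.1 ≠ 0 ∧ P (u.2 / u.1)} = #{a : F | a ≠ 0} * #{t : F | P t} := by
  rw [← card_product]
  refine card_nbij' (fun u => (u.1, u.2 / u.1)) (fun p => (p.1, p.1 * p.2))
    (fun u hu => ?_) (fun p hp => ?_) (fun u hu => ?_) (fun p hp => ?_)
  · simpa using hu
  · simp only [coe_product, coe_filter, mem_univ, true_and, Set.mem_prod, Set.mem_ofPred_eq] at hp
    simpa [mul_div_cancel_left₀ _ hp.1] using hp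
  · simp only [coe_filter, mem_univ, true_and, Set.mem_ofPred_eq] at hu
    simp [mul_div_cancel₀ _ hu.1]
  · simp only [coe_product, coe_filter, mem_univ, true_and, Set.mem_prod, Set.mem_ofPred_eq] at hp
    simp [mul_div_cancel_left₀ _ hp.1]

end QuadraticCount

open QuadraticCount

/-- if η(w) = −1, the number of pairs (u₁,u₂) ∈ F_q* × F_q* such
that u₁·x² + u₂·x − u₁·w = 0 has exactly two distinct solutions equals
(q−1)(q − 2 + η(−1))/2. -/
theorem stmt11 {F : Type*} [Field F] [Fintype F] [DecidableEq F]
    (hq : Odd (Fintype.card F)) (w : F) (hw : quadraticChar F w = -1) :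
    ((Finset.univ.filter (fun u : F × F => u.1 ≠ 0 ∧ u.2 ≠ 0 ∧
        (Finset.univ.filter (fun x : F => u.1 * x ^ 2 + u.2 * x - u.1 * w = 0)).card = 2)).card : ℤ)
      = ((Fintype.card F : ℤ) - 1) * ((Fintype.card F : ℤ) - 2 + quadraticChar F (-1)) / 2 := by
  have hF := ringChar_ne_two_of_odd_card hq
  have h2 : (2 : F) ≠ 0 := Ring.two_ne_zero hF
  have hw0 : w ≠ 0 := fun h => by simp [h] at hw
  have hneg : quadraticChar F (-(4 * w)) = -quadraticChar F (-1) := by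
    rw [show -(4 * w) = -1 * (2 ^ 2 * w) by ring, map_mul, quadraticChar_sq_mul h2, hw, mul_neg_one]
  have h4 : (4 : F) ≠ 0 := by
    rw [show (4 : F) = 2 ^ 2 by norm_num]
    exact pow_ne_zero 2 h2
  have hN := two_mul_card_quadraticChar_sq_add_eq_one hF (mul_ne_zero h4 hw0)
  rw [hneg, sub_neg_eq_add] at hN
  rw [filter_congr fun u _ =>
      and_congr_right fun hu => ne_zero_and_card_roots_eq_two_iff hF hw hu u.2,
    card_filter_fst_ne_zero_and_div (fun t => quadraticChar F (t ^ 2 + 4 * w) = 1),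
    Nat.cast_mul, natCast_card_ne_zero, ← hN, mul_left_comm,
    Int.mul_ediv_cancel_left _ two_ne_zero]
end

section
/- Let q = 2^m and let f : F_q → F_q be a bijection with f(0) = 0 and f(1) = 1 such that for every u ∈ F_q*, the map x ↦ f(x) + u·x is 2-to-1. Then the set HO(f) = {(f(c), c, 1) : c ∈ F_q} ∪ {(1,0,0)} ∪ {(0,1,0)} of q + 2 points in the projective plane PG(2, q) is a (q+2)-arc, i.e., no three of its points are collinear. -/
private lemma dot_mk {F : Type*} [Field F] (v u : Fin 3 → F) (hv : v ≠ 0) :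
    (∑ i, (Projectivization.mk F v hv).rep i * u i = 0) ↔ ∑ i, v i * u i = 0 := by
  obtain ⟨a, ha⟩ := (Projectivization.mk_eq_mk_iff F _ _
    (Projectivization.rep_nonzero _) hv).1 (Projectivization.mk_rep _)
  have hrep : ∀ i, (Projectivization.mk F v hv).rep i = (a : F) * v i := by
    intro i; rw [← ha]; rfl
  have : ∑ i, (Projectivization.mk F v hv).rep i * u i = (a : F) * ∑ i, v i * u i := by
    rw [Finset.mul_sum]
    exact Finset.sum_congr rfl fun i _ => by rw [hrep i, mul_assoc]
  rw [this, mul_eq_zero]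
  have : (a : F) ≠ 0 := a.ne_zero
  tauto

/-- the hyperoval HO(f) = {(f(c),c,1)} ∪ {(1,0,0),(0,1,0)} is a
(q+2)-arc in PG(2,q): it has q+2 points and no three of them are collinear. -/
theorem stmt12 {F : Type*} [Field F] [Fintype F] [DecidableEq F] (m : ℕ)
    (hq : Fintype.card F = 2 ^ m)
    (f : F → F) (hbij : Function.Bijective f) (hf0 : f 0 = 0) (hf1 : f 1 = 1)
    (h2to1 : ∀ u : F, u ≠ 0 → ∀ y : F,
      (Finset.univ.filter (fun x : F => f x + u * x = y)).card = 0 ∨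
      (Finset.univ.filter (fun x : F => f x + u * x = y)).card = 2)
    (S : Set (Projectivization F (Fin 3 → F)))
    (hS : S = (Set.range fun c : F =>
          Projectivization.mk F ![f c, c, 1] (by intro h; simpa using congrFun h 2))
        ∪ {Projectivization.mk F ![1, 0, 0] (by intro h; simpa using congrFun h 0),
           Projectivization.mk F ![0, 1, 0] (by intro h; simpa using congrFun h 1)}) :
    S.ncard = Fintype.card F + 2 ∧
    ∀ u : Fin 3 → F, u ≠ 0 →
      {p ∈ S | ∑ i, p.rep i * u i = 0}.ncard ≤ 2 := by
  have hvg : ∀ c : F, (![f c, c, 1] : Fin 3 → F) ≠ 0 := fun c h => by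
    simpa using congrFun h 2
  have hvP : (![1, 0, 0] : Fin 3 → F) ≠ 0 := fun h => by simpa using congrFun h 0
  have hvQ : (![0, 1, 0] : Fin 3 → F) ≠ 0 := fun h => by simpa using congrFun h 1
  set g : F → Projectivization F (Fin 3 → F) := fun c =>
    Projectivization.mk F ![f c, c, 1] (hvg c) with hgdef
  set P : Projectivization F (Fin 3 → F) := Projectivization.mk F ![1, 0, 0] hvP with hPdef
  set Q : Projectivization F (Fin 3 → F) := Projectivization.mk F ![0, 1, 0] hvQ with hQdef
  have hSeq : S = Set.range g ∪ {P, Q} := hS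
  clear hS
  -- injectivity of g
  have hginj : Function.Injective g := by
    intro c d h
    obtain ⟨a, ha⟩ := (Projectivization.mk_eq_mk_iff F _ _ (hvg c) (hvg d)).1 h
    have h2 : (a : F) * 1 = 1 := congrFun ha 2
    have h1 : (a : F) * d = c := congrFun ha 1
    rw [mul_one] at h2
    rw [h2, one_mul] at h1
    exact h1.symm
  have hgP : ∀ c, g c ≠ P := by
    intro c h
    obtain ⟨a, ha⟩ := (Projectivization.mk_eq_mk_iff F _ _ (hvg c) hvP).1 h
    have := congrFun ha 2
    simp at this
  have hgQ : ∀ c, g c ≠ Q := by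
    intro c h
    obtain ⟨a, ha⟩ := (Projectivization.mk_eq_mk_iff F _ _ (hvg c) hvQ).1 h
    have := congrFun ha 2
    simp at this
  have hPQ : P ≠ Q := by
    intro h
    obtain ⟨a, ha⟩ := (Projectivization.mk_eq_mk_iff F _ _ hvP hvQ).1 h
    have := congrFun ha 0
    simp at this
  constructor
  · -- cardinality
    rw [hSeq, Set.ncard_union_eq ?_ (Set.toFinite _) (Set.toFinite _)]
    · rw [Set.ncard_pair hPQ, ← Set.image_univ, Set.ncard_image_of_injective _ hginj,
        Set.ncard_univ, Nat.card_eq_fintype_card]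
    · rw [Set.disjoint_left]
      rintro p ⟨c, rfl⟩ hp
      rcases hp with h | h
      · exact hgP c h
      · exact hgQ c h
  · -- lines meet in at most 2 points
    intro u hu
    have hdotg : ∀ c, ((∑ i, (g c).rep i * u i) = 0) ↔ f c * u 0 + c * u 1 + u 2 = 0 := by
      intro c
      rw [hgdef, dot_mk]
      simp [Fin.sum_univ_three]
    have hdotP : ((∑ i, P.rep i * u i) = 0) ↔ u 0 = 0 := by
      rw [hPdef, dot_mk]
      simp [Fin.sum_univ_three]
    have hdotQ : ((∑ i, Q.rep i * u i) = 0) ↔ u 1 = 0 := by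
      rw [hQdef, dot_mk]
      simp [Fin.sum_univ_three]
    by_cases h0 : u 0 = 0
    · by_cases h1 : u 1 = 0
      · -- u 2 ≠ 0, only P, Q possible
        have h2 : u 2 ≠ 0 := by
          intro h2
          apply hu
          funext i
          fin_cases i <;> assumption
        have hsub : {p ∈ S | ∑ i, p.rep i * u i = 0} ⊆ {P, Q} := by
          rintro p ⟨hpS, hdot⟩
          rw [hSeq] at hpS
          rcases hpS with ⟨c, rfl⟩ | h | h
          · exfalso
            have := (hdotg c).1 hdot
            rw [h0, h1] at this
            simp at this
            exact h2 this
          · exact Or.inl h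
          · exact Or.inr h
        calc ({p ∈ S | ∑ i, p.rep i * u i = 0}).ncard ≤ ({P, Q} : Set _).ncard :=
              Set.ncard_le_ncard hsub (Set.toFinite _)
          _ = 2 := Set.ncard_pair hPQ
      · -- P and one g c
        have hsub : {p ∈ S | ∑ i, p.rep i * u i = 0} ⊆ {P, g (-(u 2) / u 1)} := by
          rintro p ⟨hpS, hdot⟩
          rw [hSeq] at hpS
          rcases hpS with ⟨c, rfl⟩ | h | h
          · right
            have hc := (hdotg c).1 hdot
            rw [h0] at hc
            have : c = -(u 2) / u 1 := by
              field_simp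
              linear_combination hc
            rw [this]
            rfl
          · exact Or.inl h
          · exfalso
            rw [h] at hdot
            exact h1 (hdotQ.1 hdot)
        calc ({p ∈ S | ∑ i, p.rep i * u i = 0}).ncard ≤ ({P, g (-(u 2) / u 1)} : Set _).ncard :=
              Set.ncard_le_ncard hsub (Set.toFinite _)
          _ ≤ 1 + 1 := by
              refine le_trans (Set.ncard_insert_le _ _) ?_
              simp
          _ = 2 := rfl
    · by_cases h1 : u 1 = 0
      · -- Q and one g c
        obtain ⟨c0, hc0⟩ := hbij.2 (-(u 2) / u 0)
        have hsub : {p ∈ S | ∑ i, p.rep i * u i = 0} ⊆ {Q, g c0} := by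
          rintro p ⟨hpS, hdot⟩
          rw [hSeq] at hpS
          rcases hpS with ⟨c, rfl⟩ | h | h
          · right
            have hc := (hdotg c).1 hdot
            rw [h1] at hc
            have : f c = -(u 2) / u 0 := by
              field_simp
              linear_combination hc
            rw [← hc0] at this
            rw [hbij.1 this]
            exact rfl
          · exfalso
            rw [h] at hdot
            exact h0 (hdotP.1 hdot)
          · exact Or.inl h
        calc ({p ∈ S | ∑ i, p.rep i * u i = 0}).ncard ≤ ({Q, g c0} : Set _).ncard :=
              Set.ncard_le_ncard hsub (Set.toFinite _)
          _ ≤ 1 + 1 := by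
              refine le_trans (Set.ncard_insert_le _ _) ?_
              simp
          _ = 2 := rfl
      · -- main case: use the 2-to-1 property
        set u' : F := u 1 / u 0 with hu'
        set y : F := -(u 2) / u 0 with hy
        have hu'0 : u' ≠ 0 := div_ne_zero h1 h0
        set A : Finset F := Finset.univ.filter (fun x : F => f x + u' * x = y) with hA
        have hsub : {p ∈ S | ∑ i, p.rep i * u i = 0} ⊆ g '' (↑A : Set F) := by
          rintro p ⟨hpS, hdot⟩
          rw [hSeq] at hpS
          rcases hpS with ⟨c, rfl⟩ | h | h
          · refine ⟨c, ?_, rfl⟩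
            have hc := (hdotg c).1 hdot
            simp only [hA, Finset.coe_filter, Set.mem_setOf_eq, Finset.mem_univ, true_and]
            rw [hu', hy]
            field_simp
            linear_combination hc
          · exfalso
            rw [h] at hdot
            exact h0 (hdotP.1 hdot)
          · exfalso
            rw [h] at hdot
            exact h1 (hdotQ.1 hdot)
        have hAcard : A.card ≤ 2 := by
          have h := h2to1 u' hu'0 y
          rw [← hA] at h
          omega
        calc ({p ∈ S | ∑ i, p.rep i * u i = 0}).ncard ≤ (g '' (↑A : Set F)).ncard :=
              Set.ncard_le_ncard hsub (Set.toFinite _)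
          _ ≤ (↑A : Set F).ncard := Set.ncard_image_le (Set.toFinite _)
          _ = A.card := Set.ncard_coe_finset A
          _ ≤ 2 := hAcard
end

section
/- Let q = 2^m, let f be an o-polynomial function on F_q (a bijection with f(0)=0 such that x ↦ f(x) + u·x is 2-to-1 for all u ∈ F_q*), and let v ∈ F_q \ {f(x) + x : x ∈ F_q}. Let S ⊆ PG(2, q) consist of the q + 2 hyperoval points {(f(c), c, 1) : c ∈ F_q} ∪ {(1,0,0), (0,1,0)} together with the three points (1,1,0), (0,v,1), (v,0,1). Then S is a (q+5, 3)-arc: no four points of S are collinear, and some three points of S are collinear. -/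
set_option linter.unusedSectionVars false
set_option maxHeartbeats 1000000

namespace Stmt14Aux

variable {F : Type*} [Field F] [Fintype F] [DecidableEq F]

lemma sum_rep_eq_zero_iff (w : Fin 3 → F) (hw : w ≠ 0) (u : Fin 3 → F) :
    (∑ i, (Projectivization.mk F w hw).rep i * u i = 0) ↔ ∑ i, w i * u i = 0 := by
  obtain ⟨a, ha⟩ := (Projectivization.mk_eq_mk_iff F _ _
      (Projectivization.rep_nonzero _) hw).mp (Projectivization.mk_rep (Projectivization.mk F w hw))
  have hrep : ∀ i, (Projectivization.mk F w hw).rep i = (a : F) * w i := by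
    intro i; rw [← ha]; simp [Units.smul_def]
  rw [Finset.sum_congr rfl (fun i _ => by rw [hrep i, mul_assoc]), ← Finset.mul_sum]
  simp [a.ne_zero]

lemma online_iff (w : Fin 3 → F) (hw : w ≠ 0) (u : Fin 3 → F) :
    (∑ i, (Projectivization.mk F w hw).rep i * u i = 0) ↔
      w 0 * u 0 + w 1 * u 1 + w 2 * u 2 = 0 := by
  rw [sum_rep_eq_zero_iff, Fin.sum_univ_three]

lemma mk_eq_mk_iff3 (w w' : Fin 3 → F) (hw : w ≠ 0) (hw' : w' ≠ 0) :
    Projectivization.mk F w hw = Projectivization.mk F w' hw' ↔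
      ∃ a : Fˣ, (a : F) * w' 0 = w 0 ∧ (a : F) * w' 1 = w 1 ∧ (a : F) * w' 2 = w 2 := by
  rw [Projectivization.mk_eq_mk_iff]
  constructor
  · rintro ⟨a, ha⟩
    refine ⟨a, ?_, ?_, ?_⟩ <;> · rw [← ha]; simp [Units.smul_def]
  · rintro ⟨a, h0, h1, h2⟩
    refine ⟨a, funext fun i => ?_⟩
    fin_cases i <;> simpa [Units.smul_def]

lemma mk_ne_of {w w' : Fin 3 → F} (hw : w ≠ 0) (hw' : w' ≠ 0) (i : Fin 3)
    (h1 : w i = 0) (h2 : w' i ≠ 0) :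
    Projectivization.mk F w hw ≠ Projectivization.mk F w' hw' := by
  intro heq
  obtain ⟨a, ha⟩ := (Projectivization.mk_eq_mk_iff F _ _ hw hw').mp heq
  have h3 : (a : F) * w' i = 0 := by
    have := congrFun ha i
    simpa [Units.smul_def, h1] using this
  rcases mul_eq_zero.mp h3 with h | h
  · exact a.ne_zero h
  · exact h2 h

lemma ncard_le_two' {α : Type*} (s : Set α) (hs : s.Finite)
    (h : ∀ a ∈ s, ∀ b ∈ s, ∀ c ∈ s, a = b ∨ a = c ∨ b = c) : s.ncard ≤ 2 := by
  by_contra hcon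
  push_neg at hcon
  obtain ⟨t, hts, ht3⟩ := Set.exists_subset_card_eq (show 3 ≤ s.ncard by omega)
  obtain ⟨x, y, z, hxy, hxz, hyz, rfl⟩ := Set.ncard_eq_three.mp ht3
  rcases h x (hts (by simp)) y (hts (by simp)) z (hts (by simp)) with h' | h' | h' <;> tauto

lemma main {F : Type*} [Field F] [Fintype F] [DecidableEq F] (m : ℕ)
    (hq : Fintype.card F = 2 ^ m)
    (f : F → F) (hbij : Function.Bijective f) (hf0 : f 0 = 0)
    (h2to1 : ∀ u : F, u ≠ 0 → ∀ y : F,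
      (Finset.univ.filter (fun x : F => f x + u * x = y)).card = 0 ∨
      (Finset.univ.filter (fun x : F => f x + u * x = y)).card = 2)
    (v : F) (hv : v ∉ {y : F | ∃ x : F, f x + x = y})
    (P : F → Projectivization F (Fin 3 → F))
    (e1 e2 d aa bb : Projectivization F (Fin 3 → F))
    (hPdef : P = fun c : F =>
        Projectivization.mk F ![f c, c, 1] (by intro h; simpa using congrFun h 2))
    (he1 : e1 = Projectivization.mk F ![1, 0, 0] (by intro h; simpa using congrFun h 0))
    (he2 : e2 = Projectivization.mk F ![0, 1, 0] (by intro h; simpa using congrFun h 1))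
    (hd : d = Projectivization.mk F ![1, 1, 0] (by intro h; simpa using congrFun h 0))
    (haa : aa = Projectivization.mk F ![0, v, 1] (by intro h; simpa using congrFun h 2))
    (hbb : bb = Projectivization.mk F ![v, 0, 1] (by intro h; simpa using congrFun h 2)) :
    (Set.range P ∪ {e1, e2, d, aa, bb}).ncard = Fintype.card F + 5 ∧
    (∀ u : Fin 3 → F, u ≠ 0 →
      {p ∈ Set.range P ∪ {e1, e2, d, aa, bb} | ∑ i, p.rep i * u i = 0}.ncard ≤ 3) ∧
    (∃ u : Fin 3 → F, u ≠ 0 ∧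
      {p ∈ Set.range P ∪ {e1, e2, d, aa, bb} | ∑ i, p.rep i * u i = 0}.ncard = 3) := by
  classical
  haveI hfin : Finite (Projectivization F (Fin 3 → F)) := Quotient.finite _
  -- basic field facts
  have hv' : ∀ c : F, f c + c ≠ v := fun c h => hv ⟨c, h⟩
  have hv0 : v ≠ 0 := fun h => hv ⟨0, by simp [hf0, h]⟩
  have hcard2 : (2 : F) = 0 := by
    have h0 : (Fintype.card F : F) = 0 := FiniteField.cast_card_eq_zero F
    rw [hq] at h0
    push_cast at h0
    have hm : m ≠ 0 := by
      rintro rfl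
      have h2 := Fintype.one_lt_card (α := F)
      rw [hq] at h2; norm_num at h2
    exact (pow_eq_zero_iff hm).mp h0
  have haddeq : ∀ a b : F, a + b = 0 → a = b := by
    intro a b h
    linear_combination h - b * hcard2
  -- incidence characterizations
  have honP : ∀ (c : F) (u : Fin 3 → F),
      (∑ i, (P c).rep i * u i = 0) ↔ f c * u 0 + c * u 1 + u 2 = 0 := by
    intro c u
    rw [hPdef]
    rw [online_iff]
    simp
  have honE1 : ∀ u : Fin 3 → F, (∑ i, e1.rep i * u i = 0) ↔ u 0 = 0 := by
    intro u; rw [he1, online_iff]; simp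
  have honE2 : ∀ u : Fin 3 → F, (∑ i, e2.rep i * u i = 0) ↔ u 1 = 0 := by
    intro u; rw [he2, online_iff]; simp
  have honD : ∀ u : Fin 3 → F, (∑ i, d.rep i * u i = 0) ↔ u 0 + u 1 = 0 := by
    intro u; rw [hd, online_iff]; simp
  have honA : ∀ u : Fin 3 → F, (∑ i, aa.rep i * u i = 0) ↔ v * u 1 + u 2 = 0 := by
    intro u; rw [haa, online_iff]; simp
  have honB : ∀ u : Fin 3 → F, (∑ i, bb.rep i * u i = 0) ↔ v * u 0 + u 2 = 0 := by
    intro u; rw [hbb, online_iff]; simp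
  -- distinctness
  have hPinj : Function.Injective P := by
    intro c c' h
    rw [hPdef] at h
    obtain ⟨a, h0, h1, h2⟩ := (mk_eq_mk_iff3 _ _ _ _).mp h
    simp only [Matrix.cons_val_zero, Matrix.cons_val_one, Matrix.head_cons,
      Matrix.cons_val_two, Matrix.tail_cons, mul_one] at h0 h1 h2
    rw [h2, one_mul] at h1
    exact h1.symm
  have hPe1 : ∀ c, P c ≠ e1 := by
    intro c
    rw [hPdef, he1]
    exact (mk_ne_of _ _ 2 (by simp) (by simp)).symm
  have hPe2 : ∀ c, P c ≠ e2 := by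
    intro c
    rw [hPdef, he2]
    exact (mk_ne_of _ _ 2 (by simp) (by simp)).symm
  have hPd : ∀ c, P c ≠ d := by
    intro c
    rw [hPdef, hd]
    exact (mk_ne_of _ _ 2 (by simp) (by simp)).symm
  have hPa : ∀ c, P c ≠ aa := by
    intro c h
    rw [hPdef, haa] at h
    obtain ⟨a, h0, h1, h2⟩ := (mk_eq_mk_iff3 _ _ _ _).mp h
    simp only [Matrix.cons_val_zero, Matrix.cons_val_one, Matrix.head_cons,
      Matrix.cons_val_two, Matrix.tail_cons, mul_zero, mul_one] at h0 h1 h2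
    rw [h2, one_mul] at h1
    have hc0 : c = 0 := hbij.1 (by rw [← h0, hf0])
    rw [hc0] at h1
    exact hv0 h1
  have hPb : ∀ c, P c ≠ bb := by
    intro c h
    rw [hPdef, hbb] at h
    obtain ⟨a, h0, h1, h2⟩ := (mk_eq_mk_iff3 _ _ _ _).mp h
    simp only [Matrix.cons_val_zero, Matrix.cons_val_one, Matrix.head_cons,
      Matrix.cons_val_two, Matrix.tail_cons, mul_zero, mul_one] at h0 h1 h2
    rw [h2, one_mul] at h0
    rw [← h1, hf0] at h0
    exact hv0 h0
  have he1e2 : e1 ≠ e2 := by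
    rw [he1, he2]; exact mk_ne_of _ _ 1 (by simp) (by simp)
  have he1d : e1 ≠ d := by
    rw [he1, hd]; exact mk_ne_of _ _ 1 (by simp) (by simp)
  have he1a : e1 ≠ aa := by
    rw [he1, haa]; exact mk_ne_of _ _ 2 (by simp) (by simp)
  have he1b : e1 ≠ bb := by
    rw [he1, hbb]; exact mk_ne_of _ _ 2 (by simp) (by simp)
  have he2d : e2 ≠ d := by
    rw [he2, hd]; exact mk_ne_of _ _ 0 (by simp) (by simp)
  have he2a : e2 ≠ aa := by
    rw [he2, haa]; exact mk_ne_of _ _ 2 (by simp) (by simp)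
  have he2b : e2 ≠ bb := by
    rw [he2, hbb]; exact mk_ne_of _ _ 2 (by simp) (by simp)
  have hda : d ≠ aa := by
    rw [hd, haa]; exact mk_ne_of _ _ 2 (by simp) (by simp)
  have hdb : d ≠ bb := by
    rw [hd, hbb]; exact mk_ne_of _ _ 2 (by simp) (by simp)
  have hab : aa ≠ bb := by
    rw [haa, hbb]; exact mk_ne_of _ _ 0 (by simp) (by simp [hv0])
  refine ⟨?_, ?_, ?_⟩
  · -- cardinality
    have hdisj : Disjoint (Set.range P) ({e1, e2, d, aa, bb} : Set _) := by
      rw [Set.disjoint_left]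
      rintro p ⟨c, rfl⟩ hp
      simp only [Set.mem_insert_iff, Set.mem_singleton_iff] at hp
      rcases hp with h | h | h | h | h
      exacts [hPe1 c h, hPe2 c h, hPd c h, hPa c h, hPb c h]
    rw [Set.ncard_union_eq hdisj (Set.toFinite _) (Set.toFinite _)]
    have h5 : ({e1, e2, d, aa, bb} : Set _).ncard = 5 := by
      rw [Set.ncard_insert_of_notMem (by simp [he1e2, he1d, he1a, he1b]) (Set.toFinite _),
        Set.ncard_insert_of_notMem (by simp [he2d, he2a, he2b]) (Set.toFinite _),
        Set.ncard_insert_of_notMem (by simp [hda, hdb]) (Set.toFinite _),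
        Set.ncard_insert_of_notMem (by simp [hab]) (Set.toFinite _),
        Set.ncard_singleton]
    rw [h5, ← Set.image_univ, Set.ncard_image_of_injective _ hPinj, Set.ncard_univ,
      Nat.card_eq_fintype_card]
  · -- no 4 collinear
    intro u hu
    have hu3 : ¬(u 0 = 0 ∧ u 1 = 0 ∧ u 2 = 0) := by
      rintro ⟨h0, h1, h2⟩
      apply hu
      funext i
      fin_cases i <;> simpa [h0, h1, h2]
    -- algebra lemmas about collinear points of the hyperoval
    have hA1 : ∀ c c' : F, f c * u 0 + c * u 1 + u 2 = 0 → f c' * u 0 + c' * u 1 + u 2 = 0 →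
        u 0 = 0 → c = c' := by
      intro c c' hc hc' h0
      by_cases h1 : u 1 = 0
      · exfalso
        rw [h0, h1] at hc
        simp at hc
        exact hu3 ⟨h0, h1, hc⟩
      · have hsub : (c - c') * u 1 = 0 := by
          linear_combination hc - hc' - (f c - f c') * h0
        rcases mul_eq_zero.mp hsub with h | h
        · exact sub_eq_zero.mp h
        · exact absurd h h1
    have hA2 : ∀ c c' : F, f c * u 0 + c * u 1 + u 2 = 0 → f c' * u 0 + c' * u 1 + u 2 = 0 →
        u 1 = 0 → c = c' := by
      intro c c' hc hc' h1
      by_cases h0 : u 0 = 0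
      · exfalso
        rw [h0, h1] at hc
        simp at hc
        exact hu3 ⟨h0, h1, hc⟩
      · have hsub : (f c - f c') * u 0 = 0 := by
          linear_combination hc - hc' - (c - c') * h1
        rcases mul_eq_zero.mp hsub with h | h
        · exact hbij.1 (sub_eq_zero.mp h)
        · exact absurd h h0
    have hA3 : ∀ c : F, f c * u 0 + c * u 1 + u 2 = 0 → u 0 = 0 → u 1 = 0 → False := by
      intro c hc h0 h1
      rw [h0, h1] at hc
      simp at hc
      exact hu3 ⟨h0, h1, hc⟩
    have hA4 : ∀ c c' c'' : F, f c * u 0 + c * u 1 + u 2 = 0 →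
        f c' * u 0 + c' * u 1 + u 2 = 0 → f c'' * u 0 + c'' * u 1 + u 2 = 0 →
        c = c' ∨ c = c'' ∨ c' = c'' := by
      intro c c' c'' hc hc' hc''
      by_cases h0 : u 0 = 0
      · exact Or.inl (hA1 c c' hc hc' h0)
      by_cases h1 : u 1 = 0
      · exact Or.inl (hA2 c c' hc hc' h1)
      have key : ∀ x : F, f x * u 0 + x * u 1 + u 2 = 0 →
          f x + (u 1 / u 0) * x = -(u 2 / u 0) := by
        intro x hx
        field_simp
        linear_combination hx
      by_contra hne
      push_neg at hne
      obtain ⟨hcd, hce, hde⟩ := hne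
      have hsub : ({c, c', c''} : Finset F) ⊆
          Finset.univ.filter (fun x => f x + (u 1 / u 0) * x = -(u 2 / u 0)) := by
        intro x hx
        simp only [Finset.mem_insert, Finset.mem_singleton] at hx
        rcases hx with rfl | rfl | rfl <;>
          simp [Finset.mem_filter, key _ ‹_›, key _ hc, key _ hc', key _ hc'']
      have h3 : ({c, c', c''} : Finset F).card = 3 := by
        rw [Finset.card_insert_of_notMem (by simp [hcd, hce]),
          Finset.card_insert_of_notMem (by simp [hde]), Finset.card_singleton]
      have hle := Finset.card_le_card hsub
      rcases h2to1 (u 1 / u 0) (div_ne_zero h1 h0) (-(u 2 / u 0)) with h | h <;> omega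
    set T : Set (Projectivization F (Fin 3 → F)) :=
      {p ∈ Set.range P ∪ {e1, e2, d, aa, bb} | ∑ i, p.rep i * u i = 0} with hT
    by_cases hsp : u 1 = u 0 ∧ u 2 = v * u 0
    · -- the special line {D, A, B}
      have h00 : u 0 ≠ 0 := by
        intro h0
        exact hu3 ⟨h0, by rw [hsp.1, h0], by rw [hsp.2, h0, mul_zero]⟩
      have hsubX : T ⊆ {d, aa, bb} := by
        rintro p ⟨hpS, hpl⟩
        simp only [Set.mem_union, Set.mem_range, Set.mem_insert_iff,
          Set.mem_singleton_iff] at hpS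
        rcases hpS with ⟨c, rfl⟩ | rfl | rfl | rfl | rfl | rfl
        · exfalso
          rw [honP] at hpl
          apply hv' c
          have hmul : (f c + c + v) * u 0 = 0 := by
            linear_combination hpl - c * hsp.1 - hsp.2
          rcases mul_eq_zero.mp hmul with h | h
          · exact haddeq _ _ h
          · exact absurd h h00
        · exact absurd ((honE1 u).mp hpl) h00
        · exact absurd (by rw [← hsp.1]; exact (honE2 u).mp hpl) h00
        · simp
        · simp
        · simp
      calc T.ncard ≤ ({d, aa, bb} : Set _).ncard :=
            Set.ncard_le_ncard hsubX (Set.toFinite _)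
        _ ≤ ({aa, bb} : Set _).ncard + 1 := Set.ncard_insert_le _ _
        _ ≤ (({bb} : Set _).ncard + 1) + 1 :=
            Nat.add_le_add_right (Set.ncard_insert_le _ _) 1
        _ ≤ 3 := by simp
    · -- generic line
      have hsplit : T ⊆ (T ∩ (Set.range P ∪ {e1, e2})) ∪ (T ∩ {d, aa, bb}) := by
        intro p hp
        have hpS := hp.1
        simp only [Set.mem_union, Set.mem_range, Set.mem_insert_iff,
          Set.mem_singleton_iff] at hpS
        rcases hpS with ⟨c, hc⟩ | h | h | h | h | h
        · exact Or.inl ⟨hp, Or.inl ⟨c, hc⟩⟩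
        · exact Or.inl ⟨hp, Or.inr (by simp [h])⟩
        · exact Or.inl ⟨hp, Or.inr (by simp [h])⟩
        · exact Or.inr ⟨hp, by simp [h]⟩
        · exact Or.inr ⟨hp, by simp [h]⟩
        · exact Or.inr ⟨hp, by simp [h]⟩
      have hXle : (T ∩ {d, aa, bb}).ncard ≤ 1 := by
        rw [Set.ncard_le_one (Set.toFinite _)]
        rintro x ⟨⟨-, hxl⟩, hxX⟩ y ⟨⟨-, hyl⟩, hyX⟩
        simp only [Set.mem_insert_iff, Set.mem_singleton_iff] at hxX hyX
        rcases hxX with rfl | rfl | rfl <;> rcases hyX with rfl | rfl | rfl <;>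
          simp only [honD, honA, honB] at hxl hyl
        · rfl
        · -- d, aa
          exfalso; apply hsp
          have h1 : u 0 = u 1 := haddeq _ _ hxl
          have h2 : v * u 1 = u 2 := haddeq _ _ hyl
          exact ⟨h1.symm, by rw [← h2, h1]⟩
        · -- d, bb
          exfalso; apply hsp
          have h1 : u 0 = u 1 := haddeq _ _ hxl
          have h2 : v * u 0 = u 2 := haddeq _ _ hyl
          exact ⟨h1.symm, h2.symm⟩
        · -- aa, d
          exfalso; apply hsp
          have h1 : u 0 = u 1 := haddeq _ _ hyl
          have h2 : v * u 1 = u 2 := haddeq _ _ hxl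
          exact ⟨h1.symm, by rw [← h2, h1]⟩
        · rfl
        · -- aa, bb
          exfalso; apply hsp
          have h1 : v * u 1 = u 2 := haddeq _ _ hxl
          have h2 : v * u 0 = u 2 := haddeq _ _ hyl
          exact ⟨mul_left_cancel₀ hv0 (h1.trans h2.symm), h2.symm⟩
        · -- bb, d
          exfalso; apply hsp
          have h1 : u 0 = u 1 := haddeq _ _ hyl
          have h2 : v * u 0 = u 2 := haddeq _ _ hxl
          exact ⟨h1.symm, h2.symm⟩
        · -- bb, aa
          exfalso; apply hsp
          have h1 : v * u 1 = u 2 := haddeq _ _ hyl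
          have h2 : v * u 0 = u 2 := haddeq _ _ hxl
          exact ⟨mul_left_cancel₀ hv0 (h1.trans h2.symm), h2.symm⟩
        · rfl
      have hHle : (T ∩ (Set.range P ∪ {e1, e2})).ncard ≤ 2 := by
        apply ncard_le_two' _ (Set.toFinite _)
        rintro p ⟨⟨-, hpl⟩, hpH⟩ q ⟨⟨-, hql⟩, hqH⟩ r ⟨⟨-, hrl⟩, hrH⟩
        simp only [Set.mem_union, Set.mem_range, Set.mem_insert_iff,
          Set.mem_singleton_iff] at hpH hqH hrH
        rcases hpH with ⟨c, rfl⟩ | rfl | rfl <;> rcases hqH with ⟨c', rfl⟩ | rfl | rfl <;>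
          rcases hrH with ⟨c'', rfl⟩ | rfl | rfl <;>
          simp only [honP, honE1, honE2] at hpl hql hrl
        all_goals first
          | exact Or.inl rfl
          | exact Or.inr (Or.inl rfl)
          | exact Or.inr (Or.inr rfl)
          | exact (hA3 _ hpl hql hrl).elim
          | exact (hA3 _ hpl hrl hql).elim
          | exact (hA3 _ hql hpl hrl).elim
          | exact (hA3 _ hql hrl hpl).elim
          | exact (hA3 _ hrl hpl hql).elim
          | exact (hA3 _ hrl hql hpl).elim
          | exact Or.inl (congrArg P (hA1 _ _ hpl hql hrl))
          | exact Or.inl (congrArg P (hA2 _ _ hpl hql hrl))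
          | exact Or.inr (Or.inl (congrArg P (hA1 _ _ hpl hrl hql)))
          | exact Or.inr (Or.inl (congrArg P (hA2 _ _ hpl hrl hql)))
          | exact Or.inr (Or.inr (congrArg P (hA1 _ _ hql hrl hpl)))
          | exact Or.inr (Or.inr (congrArg P (hA2 _ _ hql hrl hpl)))
          | (rcases hA4 _ _ _ hpl hql hrl with h | h | h
             exacts [Or.inl (congrArg P h), Or.inr (Or.inl (congrArg P h)),
               Or.inr (Or.inr (congrArg P h))])
      calc T.ncard ≤ ((T ∩ (Set.range P ∪ {e1, e2})) ∪ (T ∩ {d, aa, bb})).ncard :=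
            Set.ncard_le_ncard hsplit (Set.toFinite _)
        _ ≤ (T ∩ (Set.range P ∪ {e1, e2})).ncard + (T ∩ {d, aa, bb}).ncard :=
            Set.ncard_union_le _ _
        _ ≤ 3 := by omega
  · -- a line with exactly 3 points: z = 0
    refine ⟨![0, 0, 1], by intro h; simpa using congrFun h 2, ?_⟩
    have hTeq : {p ∈ Set.range P ∪ {e1, e2, d, aa, bb} |
        ∑ i, p.rep i * (![0, 0, 1] : Fin 3 → F) i = 0} = {e1, e2, d} := by
      ext p
      simp only [Set.mem_setOf_eq, Set.mem_union, Set.mem_range, Set.mem_insert_iff,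
        Set.mem_singleton_iff]
      constructor
      · rintro ⟨⟨c, rfl⟩ | rfl | rfl | rfl | rfl | rfl, hl⟩
        · rw [honP] at hl; simp at hl
        · exact Or.inl rfl
        · exact Or.inr (Or.inl rfl)
        · exact Or.inr (Or.inr rfl)
        · rw [honA] at hl; simp at hl
        · rw [honB] at hl; simp at hl
      · rintro (rfl | rfl | rfl)
        · exact ⟨Or.inr (Or.inl rfl), by rw [honE1]; simp⟩
        · exact ⟨Or.inr (Or.inr (Or.inl rfl)), by rw [honE2]; simp⟩
        · exact ⟨Or.inr (Or.inr (Or.inr (Or.inl rfl))), by rw [honD]; simp [hcard2]⟩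
    rw [hTeq]
    exact Set.ncard_eq_three.mpr ⟨e1, e2, d, he1e2, he1d, he2d, rfl⟩

end Stmt14Aux

/-- for q = 2^m, f an o-polynomial function and
v ∉ {f(x)+x}, the set S consisting of the hyperoval {(f(c),c,1)} ∪
{(1,0,0),(0,1,0)} together with (1,1,0), (0,v,1), (v,0,1) is a (q+5,3)-arc:
it has q+5 points, no line meets it in 4 or more points, and some line meets
it in exactly 3 points. -/
theorem stmt14 {F : Type*} [Field F] [Fintype F] [DecidableEq F] (m : ℕ)
    (hq : Fintype.card F = 2 ^ m)
    (f : F → F) (hbij : Function.Bijective f) (hf0 : f 0 = 0)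
    (h2to1 : ∀ u : F, u ≠ 0 → ∀ y : F,
      (Finset.univ.filter (fun x : F => f x + u * x = y)).card = 0 ∨
      (Finset.univ.filter (fun x : F => f x + u * x = y)).card = 2)
    (v : F) (hv : v ∉ {y : F | ∃ x : F, f x + x = y})
    (S : Set (Projectivization F (Fin 3 → F)))
    (hS : S = (Set.range fun c : F =>
          Projectivization.mk F ![f c, c, 1] (by intro h; simpa using congrFun h 2))
        ∪ {Projectivization.mk F ![1, 0, 0] (by intro h; simpa using congrFun h 0),
           Projectivization.mk F ![0, 1, 0] (by intro h; simpa using congrFun h 1),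
           Projectivization.mk F ![1, 1, 0] (by intro h; simpa using congrFun h 0),
           Projectivization.mk F ![0, v, 1] (by intro h; simpa using congrFun h 2),
           Projectivization.mk F ![v, 0, 1] (by intro h; simpa using congrFun h 2)}) :
    S.ncard = Fintype.card F + 5 ∧
    (∀ u : Fin 3 → F, u ≠ 0 → {p ∈ S | ∑ i, p.rep i * u i = 0}.ncard ≤ 3) ∧
    (∃ u : Fin 3 → F, u ≠ 0 ∧ {p ∈ S | ∑ i, p.rep i * u i = 0}.ncard = 3) := by
  subst hS
  exact Stmt14Aux.main m hq f hbij hf0 h2to1 v hv _ _ _ _ _ _ rfl rfl rfl rfl rfl rfl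
end

section
/- Let q be an odd prime power and w ∈ F_q with η(w) = η(1 + 4w) = −1. Let S ⊆ PG(2, q) consist of the q + 1 oval points {(x², x, 1) : x ∈ F_q} ∪ {(1,0,0)} together with the four points (0,1,0), (1,1,0), (0,w,−1), (w,0,1). Then S is a (q+5, 3)-arc: no four points of S are collinear, and some three points of S are collinear. -/
namespace Stmt15

open Projectivization

variable {F : Type*} [Field F]

lemma nzc (x : F) : (![x ^ 2, x, 1] : Fin 3 → F) ≠ 0 := by
  intro h; simpa using congrFun h 2

lemma nz1 : (![(1:F), 0, 0] : Fin 3 → F) ≠ 0 := by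
  intro h; simpa using congrFun h 0

lemma nz2 : (![(0:F), 1, 0] : Fin 3 → F) ≠ 0 := by
  intro h; simpa using congrFun h 1

lemma nz3 : (![(1:F), 1, 0] : Fin 3 → F) ≠ 0 := by
  intro h; simpa using congrFun h 0

lemma nzC (w : F) : (![(0:F), w, -1] : Fin 3 → F) ≠ 0 := by
  intro h; simpa using congrFun h 2

lemma nzD (w : F) : (![w, (0:F), 1] : Fin 3 → F) ≠ 0 := by
  intro h; simpa using congrFun h 2

def Pt (x : F) : Projectivization F (Fin 3 → F) := mk F ![x ^ 2, x, 1] (nzc x)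
def Pinf : Projectivization F (Fin 3 → F) := mk F ![1, 0, 0] nz1
def PA : Projectivization F (Fin 3 → F) := mk F ![0, 1, 0] nz2
def PB : Projectivization F (Fin 3 → F) := mk F ![1, 1, 0] nz3
def PC (w : F) : Projectivization F (Fin 3 → F) := mk F ![0, w, -1] (nzC w)
def PD (w : F) : Projectivization F (Fin 3 → F) := mk F ![w, 0, 1] (nzD w)

lemma line_mk (u v : Fin 3 → F) (hv : v ≠ 0) :
    (∑ i, (mk F v hv).rep i * u i = 0) ↔ v 0 * u 0 + v 1 * u 1 + v 2 * u 2 = 0 := by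
  obtain ⟨a, ha⟩ := exists_smul_eq_mk_rep F v hv
  have hr : ∀ i, (mk F v hv).rep i = (a : F) * v i := by
    intro i; rw [← ha]; simp [Units.smul_def]
  rw [Fin.sum_univ_three, hr 0, hr 1, hr 2]
  constructor
  · intro h
    have h' : (a : F) * (v 0 * u 0 + v 1 * u 1 + v 2 * u 2) = 0 := by linear_combination h
    exact (mul_eq_zero.mp h').resolve_left a.ne_zero
  · intro h
    linear_combination (a : F) * h

lemma line_Pt (u : Fin 3 → F) (x : F) :
    (∑ i, (Pt x).rep i * u i = 0) ↔ x ^ 2 * u 0 + x * u 1 + u 2 = 0 := by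
  rw [Pt, line_mk]
  simp only [Matrix.cons_val_zero, Matrix.cons_val_one,
      Matrix.head_cons, Matrix.cons_val_two, Matrix.tail_cons]
  constructor <;> intro h <;> linear_combination h

lemma line_Pinf (u : Fin 3 → F) : (∑ i, (Pinf (F := F)).rep i * u i = 0) ↔ u 0 = 0 := by
  rw [Pinf, line_mk]
  simp only [Matrix.cons_val_zero, Matrix.cons_val_one,
      Matrix.head_cons, Matrix.cons_val_two, Matrix.tail_cons]
  constructor <;> intro h <;> linear_combination h

lemma line_PA (u : Fin 3 → F) : (∑ i, (PA (F := F)).rep i * u i = 0) ↔ u 1 = 0 := by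
  rw [PA, line_mk]
  simp only [Matrix.cons_val_zero, Matrix.cons_val_one,
      Matrix.head_cons, Matrix.cons_val_two, Matrix.tail_cons]
  constructor <;> intro h <;> linear_combination h

lemma line_PB (u : Fin 3 → F) : (∑ i, (PB (F := F)).rep i * u i = 0) ↔ u 0 + u 1 = 0 := by
  rw [PB, line_mk]
  simp only [Matrix.cons_val_zero, Matrix.cons_val_one,
      Matrix.head_cons, Matrix.cons_val_two, Matrix.tail_cons]
  constructor <;> intro h <;> linear_combination h

lemma line_PC (u : Fin 3 → F) (w : F) :
    (∑ i, (PC w).rep i * u i = 0) ↔ w * u 1 - u 2 = 0 := by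
  rw [PC, line_mk]
  simp only [Matrix.cons_val_zero, Matrix.cons_val_one,
      Matrix.head_cons, Matrix.cons_val_two, Matrix.tail_cons]
  constructor <;> intro h <;> linear_combination h

lemma line_PD (u : Fin 3 → F) (w : F) :
    (∑ i, (PD w).rep i * u i = 0) ↔ w * u 0 + u 2 = 0 := by
  rw [PD, line_mk]
  simp only [Matrix.cons_val_zero, Matrix.cons_val_one,
      Matrix.head_cons, Matrix.cons_val_two, Matrix.tail_cons]
  constructor <;> intro h <;> linear_combination h


lemma mk_ne_of (v v' : Fin 3 → F) (hv : v ≠ 0) (hv' : v' ≠ 0)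
    (h : ∀ a : F, a ≠ 0 → ¬ (∀ i, a * v' i = v i)) :
    mk F v hv ≠ mk F v' hv' := by
  intro he
  rw [mk_eq_mk_iff] at he
  obtain ⟨a, ha⟩ := he
  exact h a a.ne_zero fun i => by rw [← ha]; simp [Units.smul_def]

section Distinct
variable (w x y : F)

lemma Pt_inj : Function.Injective (Pt : F → Projectivization F (Fin 3 → F)) := by
  intro x y h
  rw [Pt, Pt, mk_eq_mk_iff] at h
  obtain ⟨a, ha⟩ := h
  have h2 : (a : F) * 1 = 1 := by simpa [Units.smul_def] using congrFun ha 2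
  have h1 : (a : F) * y = x := by simpa [Units.smul_def] using congrFun ha 1
  rw [mul_one] at h2
  rw [h2, one_mul] at h1
  exact h1.symm

lemma Pt_ne_Pinf : Pt x ≠ Pinf (F := F) := by
  apply mk_ne_of; intro a ha h
  have := h 2; simp at this

lemma Pt_ne_PA : Pt x ≠ PA (F := F) := by
  apply mk_ne_of; intro a ha h
  have := h 2; simp at this

lemma Pt_ne_PB : Pt x ≠ PB (F := F) := by
  apply mk_ne_of; intro a ha h
  have := h 2; simp at this

lemma Pt_ne_PC (hw : w ≠ 0) : Pt x ≠ PC w := by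
  apply mk_ne_of; intro a ha h
  have h0 := h 0; have h1 := h 1; have h2 := h 2
  simp at h0 h1 h2
  -- h0 : 0 = x ^ 2, h1 : a * w = x, h2 : -a = 1 (roughly)
  apply hw
  have hx : x = 0 := by
    have := pow_eq_zero_iff (n := 2) (by norm_num) |>.mp h0.symm
    exact this
  rw [hx] at h1
  rcases mul_eq_zero.mp h1 with h | h
  · exact absurd h ha
  · exact h

lemma Pt_ne_PD (hw : w ≠ 0) : Pt x ≠ PD w := by
  apply mk_ne_of; intro a ha h
  have h0 := h 0; have h1 := h 1; have h2 := h 2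
  simp at h0 h1 h2
  -- h1 : 0 = x, h0 : a * w = x ^ 2, h2 : a = 1
  apply hw
  rw [h2, one_mul] at h0
  rw [← h1] at h0
  simpa using h0

lemma Pinf_ne_PA : Pinf (F := F) ≠ PA := by
  apply mk_ne_of; intro a ha h
  have := h 0; simp at this

lemma Pinf_ne_PB : Pinf (F := F) ≠ PB := by
  apply mk_ne_of; intro a ha h
  have h0 := h 0; have h1 := h 1; simp at h0 h1
  rw [h0] at h1; simp at h1

lemma Pinf_ne_PC : Pinf (F := F) ≠ PC w := by
  apply mk_ne_of; intro a ha h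
  have := h 0; simp at this

lemma Pinf_ne_PD : Pinf (F := F) ≠ PD w := by
  apply mk_ne_of; intro a ha h
  have h0 := h 0; have h2 := h 2; simp at h0 h2
  rw [h2] at h0; simp at h0

lemma PA_ne_PB : PA (F := F) ≠ PB := by
  apply mk_ne_of; intro a ha h
  have := h 0; simp at this; exact ha this

lemma PA_ne_PC : PA (F := F) ≠ PC w := by
  apply mk_ne_of; intro a ha h
  have h1 := h 1; have h2 := h 2; simp at h1 h2
  rw [h2] at h1; simp at h1

lemma PA_ne_PD : PA (F := F) ≠ PD w := by
  apply mk_ne_of; intro a ha h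
  have := h 1; simp at this

lemma PB_ne_PC : PB (F := F) ≠ PC w := by
  apply mk_ne_of; intro a ha h
  have := h 0; simp at this

lemma PB_ne_PD : PB (F := F) ≠ PD w := by
  apply mk_ne_of; intro a ha h
  have := h 1; simp at this

lemma PC_ne_PD (hw : w ≠ 0) : PC w ≠ PD (F := F) w := by
  apply mk_ne_of; intro a ha h
  have h1 := h 1; simp at h1
  exact hw h1.symm

end Distinct

lemma u_eq_zero (u : Fin 3 → F) (h0 : u 0 = 0) (h1 : u 1 = 0) (h2 : u 2 = 0) : u = 0 := by
  funext i; fin_cases i <;> simpa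

lemma ncard_pair_le {α : Type*} (a b : α) : ({a, b} : Set α).ncard ≤ 2 :=
  (Set.ncard_insert_le _ _).trans (by simp)

lemma ncard_triple_le {α : Type*} (a b c : α) : ({a, b, c} : Set α).ncard ≤ 3 := by
  have := ncard_pair_le b c
  have h := Set.ncard_insert_le a ({b, c} : Set α)
  omega

lemma oval_line (u : Fin 3 → F) (hu : u ≠ 0) :
    {p ∈ (Set.range Pt ∪ {Pinf} : Set (Projectivization F (Fin 3 → F))) |
      ∑ i, p.rep i * u i = 0}.ncard ≤ 2 := by
  by_cases ha : u 0 = 0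
  · by_cases hb : u 1 = 0
    · have hc : u 2 ≠ 0 := fun hc => hu (u_eq_zero u ha hb hc)
      have hsub : {p ∈ (Set.range Pt ∪ {Pinf} : Set (Projectivization F (Fin 3 → F))) |
          ∑ i, p.rep i * u i = 0} ⊆ {Pinf} := by
        rintro p ⟨hp, hl⟩
        rcases hp with ⟨x, rfl⟩ | hp
        · rw [line_Pt, ha, hb] at hl
          simp at hl
          exact absurd hl hc
        · exact hp
      exact (Set.ncard_le_ncard hsub (Set.toFinite _)).trans (by simp)
    · have hsub : {p ∈ (Set.range Pt ∪ {Pinf} : Set (Projectivization F (Fin 3 → F))) |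
          ∑ i, p.rep i * u i = 0} ⊆ {Pt (-u 2 / u 1), Pinf} := by
        rintro p ⟨hp, hl⟩
        rcases hp with ⟨x, rfl⟩ | hp
        · rw [line_Pt, ha] at hl
          have hx : x = -u 2 / u 1 := by
            field_simp
            linear_combination hl
          exact Or.inl (by rw [hx])
        · exact Or.inr hp
      exact (Set.ncard_le_ncard hsub (Set.toFinite _)).trans (ncard_pair_le _ _)
  · by_cases hroot : ∃ r : F, r ^ 2 * u 0 + r * u 1 + u 2 = 0
    · obtain ⟨r, hr⟩ := hroot
      have hsub : {p ∈ (Set.range Pt ∪ {Pinf} : Set (Projectivization F (Fin 3 → F))) |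
          ∑ i, p.rep i * u i = 0} ⊆ {Pt r, Pt (-u 1 / u 0 - r)} := by
        rintro p ⟨hp, hl⟩
        rcases hp with ⟨x, rfl⟩ | hp
        · rw [line_Pt] at hl
          have key : (x - r) * (u 0 * (x + r) + u 1) = 0 := by linear_combination hl - hr
          rcases mul_eq_zero.mp key with h | h
          · rw [sub_eq_zero] at h
            exact Or.inl (by rw [h])
          · have hx : x = -u 1 / u 0 - r := by
              field_simp
              linear_combination h
            exact Or.inr (by rw [hx]; rfl)
        · rw [Set.mem_singleton_iff] at hp
          subst hp
          rw [line_Pinf] at hl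
          exact absurd hl ha
      exact (Set.ncard_le_ncard hsub (Set.toFinite _)).trans (ncard_pair_le _ _)
    · have hempty : {p ∈ (Set.range Pt ∪ {Pinf} : Set (Projectivization F (Fin 3 → F))) |
          ∑ i, p.rep i * u i = 0} = ∅ := by
        ext p
        simp only [Set.mem_setOf_eq, Set.mem_empty_iff_false, iff_false, not_and]
        rintro hp hl
        rcases hp with ⟨x, rfl⟩ | hp
        · rw [line_Pt] at hl
          exact hroot ⟨x, hl⟩
        · rw [Set.mem_singleton_iff] at hp
          subst hp
          rw [line_Pinf] at hl
          exact absurd hl ha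
      rw [hempty]
      simp


lemma generic_bound [Fintype F] (w : F) (u : Fin 3 → F) (hu : u ≠ 0)
    (e : Projectivization F (Fin 3 → F))
    (hext : ∀ p : Projectivization F (Fin 3 → F),
      p = PA ∨ p = PB ∨ p = PC w ∨ p = PD w → (∑ i, p.rep i * u i = 0) → p = e) :
    {p ∈ (Set.range Pt ∪ {Pinf, PA, PB, PC w, PD w} :
        Set (Projectivization F (Fin 3 → F))) | ∑ i, p.rep i * u i = 0}.ncard ≤ 3 := by
  set A : Set (Projectivization F (Fin 3 → F)) :=
    {p ∈ (Set.range Pt ∪ {Pinf} : Set (Projectivization F (Fin 3 → F))) |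
      ∑ i, p.rep i * u i = 0} with hA
  have hfin : A.Finite :=
    (((Set.finite_range Pt).union (Set.finite_singleton _)).subset (Set.sep_subset _ _))
  have hsub : {p ∈ (Set.range Pt ∪ {Pinf, PA, PB, PC w, PD w} :
      Set (Projectivization F (Fin 3 → F))) | ∑ i, p.rep i * u i = 0} ⊆ A ∪ {e} := by
    rintro p ⟨hp, hl⟩
    simp only [Set.mem_union, Set.mem_range, Set.mem_insert_iff, Set.mem_singleton_iff] at hp
    rcases hp with (⟨x, rfl⟩ | rfl | h)
    · exact Or.inl ⟨Or.inl ⟨x, rfl⟩, hl⟩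
    · exact Or.inl ⟨Or.inr rfl, hl⟩
    · exact Or.inr (hext p h hl)
  calc {p ∈ (Set.range Pt ∪ {Pinf, PA, PB, PC w, PD w} :
        Set (Projectivization F (Fin 3 → F))) | ∑ i, p.rep i * u i = 0}.ncard
      ≤ (A ∪ {e}).ncard := Set.ncard_le_ncard hsub (hfin.union (Set.finite_singleton _))
    _ ≤ A.ncard + ({e} : Set (Projectivization F (Fin 3 → F))).ncard := Set.ncard_union_le _ _
    _ ≤ 2 + 1 := add_le_add (oval_line u hu) (by simp)
    _ ≤ 3 := by norm_num

end Stmt15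

open Stmt15 Projectivization in
/-- for odd q and w with η(w) = η(1+4w) = −1, the set S
consisting of the oval {(x²,x,1)} ∪ {(1,0,0)} together with (0,1,0), (1,1,0),
(0,w,−1), (w,0,1) is a (q+5,3)-arc. -/
theorem stmt15 {F : Type*} [Field F] [Fintype F] [DecidableEq F]
    (hq : Odd (Fintype.card F)) (w : F)
    (hw : quadraticChar F w = -1) (hw4 : quadraticChar F (1 + 4 * w) = -1)
    (S : Set (Projectivization F (Fin 3 → F)))
    (hS : S = (Set.range fun x : F =>
          Projectivization.mk F ![x ^ 2, x, 1] (by intro h; simpa using congrFun h 2))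
        ∪ {Projectivization.mk F ![1, 0, 0] (by intro h; simpa using congrFun h 0),
           Projectivization.mk F ![0, 1, 0] (by intro h; simpa using congrFun h 1),
           Projectivization.mk F ![1, 1, 0] (by intro h; simpa using congrFun h 0),
           Projectivization.mk F ![0, w, -1] (by intro h; simpa using congrFun h 2),
           Projectivization.mk F ![w, 0, 1] (by intro h; simpa using congrFun h 2)}) :
    S.ncard = Fintype.card F + 5 ∧
    (∀ u : Fin 3 → F, u ≠ 0 → {p ∈ S | ∑ i, p.rep i * u i = 0}.ncard ≤ 3) ∧
    (∃ u : Fin 3 → F, u ≠ 0 ∧ {p ∈ S | ∑ i, p.rep i * u i = 0}.ncard = 3) := by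
  subst hS
  have hw0 : w ≠ 0 := by
    rintro rfl
    rw [quadraticChar_zero] at hw
    exact absurd hw (by norm_num)
  have hnsq_w : ∀ x : F, x ^ 2 ≠ w := fun x hx =>
    (quadraticChar_neg_one_iff_not_isSquare.mp hw) ⟨x, by rw [← hx]; ring⟩
  have hnsq4 : ∀ x : F, x ^ 2 ≠ 1 + 4 * w := fun x hx =>
    (quadraticChar_neg_one_iff_not_isSquare.mp hw4) ⟨x, by rw [← hx]; ring⟩
  refine ⟨?_, ?_, ?_⟩
  · show (Set.range Pt ∪ {Pinf, PA, PB, PC w, PD w} :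
        Set (Projectivization F (Fin 3 → F))).ncard = Fintype.card F + 5
    have hdisj : Disjoint (Set.range Pt)
        ({Pinf, PA, PB, PC w, PD w} : Set (Projectivization F (Fin 3 → F))) := by
      rw [Set.disjoint_left]
      rintro p ⟨x, rfl⟩ hp
      simp only [Set.mem_insert_iff, Set.mem_singleton_iff] at hp
      rcases hp with h | h | h | h | h
      exacts [Pt_ne_Pinf x h, Pt_ne_PA x h, Pt_ne_PB x h,
        Pt_ne_PC w x hw0 h, Pt_ne_PD w x hw0 h]
    rw [Set.ncard_union_eq hdisj (Set.finite_range _) (Set.toFinite _)]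
    have h1 : (Set.range (Pt : F → Projectivization F (Fin 3 → F))).ncard = Fintype.card F := by
      rw [← Set.image_univ, Set.ncard_image_of_injective _ Pt_inj, Set.ncard_univ,
        Nat.card_eq_fintype_card]
    have h5 : ({Pinf, PA, PB, PC w, PD w} :
        Set (Projectivization F (Fin 3 → F))).ncard = 5 := by
      rw [Set.ncard_insert_of_notMem (by simp [Pinf_ne_PA, Pinf_ne_PB, Pinf_ne_PC, Pinf_ne_PD])
          (Set.toFinite _),
        Set.ncard_insert_of_notMem (by simp [PA_ne_PB, PA_ne_PC, PA_ne_PD]) (Set.toFinite _),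
        Set.ncard_insert_of_notMem (by simp [PB_ne_PC, PB_ne_PD]) (Set.toFinite _),
        Set.ncard_insert_of_notMem (by simp [PC_ne_PD w hw0]) (Set.toFinite _),
        Set.ncard_singleton]
    rw [h1, h5]
  · intro u hu
    show {p ∈ (Set.range Pt ∪ {Pinf, PA, PB, PC w, PD w} :
        Set (Projectivization F (Fin 3 → F))) | ∑ i, p.rep i * u i = 0}.ncard ≤ 3
    by_cases hA : u 1 = 0 <;> by_cases hB : u 0 + u 1 = 0 <;>
      by_cases hC : w * u 1 - u 2 = 0 <;> by_cases hD : w * u 0 + u 2 = 0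
    -- TTTT
    · exact absurd (u_eq_zero u (by linear_combination hB - hA) hA
        (by linear_combination w * hA - hC)) hu
    -- TTTF
    · exact absurd (u_eq_zero u (by linear_combination hB - hA) hA
        (by linear_combination w * hA - hC)) hu
    -- TTFT
    · exact absurd (u_eq_zero u (by linear_combination hB - hA) hA
        (by linear_combination hD - w * hB + w * hA)) hu
    -- TTFF : line z = 0
    · have h0 : u 0 = 0 := by linear_combination hB - hA
      have hc : u 2 ≠ 0 := fun h => hC (by rw [hA, h]; ring)
      refine (Set.ncard_le_ncard ?_ (Set.toFinite _)).trans (ncard_triple_le Pinf PA PB)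
      rintro p ⟨hp, hl⟩
      simp only [Set.mem_union, Set.mem_range, Set.mem_insert_iff,
        Set.mem_singleton_iff] at hp ⊢
      rcases hp with (⟨x, rfl⟩ | rfl | rfl | rfl | rfl | rfl)
      · rw [line_Pt, h0, hA] at hl; simp at hl; exact absurd hl hc
      · exact Or.inl rfl
      · exact Or.inr (Or.inl rfl)
      · exact Or.inr (Or.inr rfl)
      · rw [line_PC] at hl; exact absurd hl hC
      · rw [line_PD] at hl; exact absurd hl hD
    -- TFTT
    · have h2 : u 2 = 0 := by linear_combination w * hA - hC
      have hww : w * u 0 = 0 := by linear_combination hD - w * hA + hC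
      exact absurd (u_eq_zero u ((mul_eq_zero.mp hww).resolve_left hw0) hA h2) hu
    -- TFTF : line x = 0
    · have h2 : u 2 = 0 := by linear_combination w * hA - hC
      have h0 : u 0 ≠ 0 := fun h => hB (by rw [h, hA]; ring)
      refine (Set.ncard_le_ncard ?_ (Set.toFinite _)).trans (ncard_triple_le (Pt 0) PA (PC w))
      rintro p ⟨hp, hl⟩
      simp only [Set.mem_union, Set.mem_range, Set.mem_insert_iff,
        Set.mem_singleton_iff] at hp ⊢
      rcases hp with (⟨x, rfl⟩ | rfl | rfl | rfl | rfl | rfl)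
      · rw [line_Pt, hA, h2] at hl
        have h' : x ^ 2 = 0 := by
          rcases mul_eq_zero.mp (show x ^ 2 * u 0 = 0 by linear_combination hl) with h | h
          · exact h
          · exact absurd h h0
        have hx : x = 0 := pow_eq_zero_iff (n := 2) (by norm_num) |>.mp h'
        exact Or.inl (by rw [hx])
      · rw [line_Pinf] at hl; exact absurd hl h0
      · exact Or.inr (Or.inl rfl)
      · rw [line_PB] at hl; exact absurd hl hB
      · exact Or.inr (Or.inr rfl)
      · rw [line_PD] at hl
        have hww : w * u 0 = 0 := by linear_combination hl - h2
        exact absurd ((mul_eq_zero.mp hww).resolve_left hw0) h0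
    -- TFFT : line x = w z
    · have h0 : u 0 ≠ 0 := by
        intro h
        exact hu (u_eq_zero u h hA (by linear_combination hD - w * h))
      refine (Set.ncard_le_ncard ?_ (Set.toFinite _)).trans (ncard_triple_le PA (PD w) PA)
      rintro p ⟨hp, hl⟩
      simp only [Set.mem_union, Set.mem_range, Set.mem_insert_iff,
        Set.mem_singleton_iff] at hp ⊢
      rcases hp with (⟨x, rfl⟩ | rfl | rfl | rfl | rfl | rfl)
      · rw [line_Pt] at hl
        have h' : u 0 * (x ^ 2 - w) = 0 := by linear_combination hl - hD - x * hA
        exact absurd (sub_eq_zero.mp ((mul_eq_zero.mp h').resolve_left h0)) (hnsq_w x)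
      · rw [line_Pinf] at hl; exact absurd hl h0
      · exact Or.inl rfl
      · rw [line_PB] at hl; exact absurd hl hB
      · rw [line_PC] at hl; exact absurd hl hC
      · exact Or.inr (Or.inl rfl)
    -- TFFF : generic, only PA possible
    · refine generic_bound w u hu PA ?_
      rintro p (rfl | rfl | rfl | rfl) hl
      · rfl
      · rw [line_PB] at hl; exact absurd hl hB
      · rw [line_PC] at hl; exact absurd hl hC
      · rw [line_PD] at hl; exact absurd hl hD
    -- FTTT : line x = y + wz
    · refine (Set.ncard_le_ncard ?_ (Set.toFinite _)).trans (ncard_triple_le PB (PC w) (PD w))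
      rintro p ⟨hp, hl⟩
      simp only [Set.mem_union, Set.mem_range, Set.mem_insert_iff,
        Set.mem_singleton_iff] at hp ⊢
      rcases hp with (⟨x, rfl⟩ | rfl | rfl | rfl | rfl | rfl)
      · rw [line_Pt] at hl
        have h' : u 1 * (x ^ 2 - x - w) = 0 := by linear_combination -hl + x ^ 2 * hB - hC
        have hq' : x ^ 2 - x - w = 0 := (mul_eq_zero.mp h').resolve_left hA
        exact absurd (show (2 * x - 1) ^ 2 = 1 + 4 * w by linear_combination 4 * hq') (hnsq4 _)
      · rw [line_Pinf] at hl; exact absurd (show u 1 = 0 by linear_combination hB - hl) hA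
      · rw [line_PA] at hl; exact absurd hl hA
      · exact Or.inl rfl
      · exact Or.inr (Or.inl rfl)
      · exact Or.inr (Or.inr rfl)
    -- FTTF : same line
    · refine (Set.ncard_le_ncard ?_ (Set.toFinite _)).trans (ncard_triple_le PB (PC w) (PD w))
      rintro p ⟨hp, hl⟩
      simp only [Set.mem_union, Set.mem_range, Set.mem_insert_iff,
        Set.mem_singleton_iff] at hp ⊢
      rcases hp with (⟨x, rfl⟩ | rfl | rfl | rfl | rfl | rfl)
      · rw [line_Pt] at hl
        have h' : u 1 * (x ^ 2 - x - w) = 0 := by linear_combination -hl + x ^ 2 * hB - hC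
        have hq' : x ^ 2 - x - w = 0 := (mul_eq_zero.mp h').resolve_left hA
        exact absurd (show (2 * x - 1) ^ 2 = 1 + 4 * w by linear_combination 4 * hq') (hnsq4 _)
      · rw [line_Pinf] at hl; exact absurd (show u 1 = 0 by linear_combination hB - hl) hA
      · rw [line_PA] at hl; exact absurd hl hA
      · exact Or.inl rfl
      · exact Or.inr (Or.inl rfl)
      · exact Or.inr (Or.inr rfl)
    -- FTFT : contradiction, hC follows
    · exact absurd (show w * u 1 - u 2 = 0 by linear_combination w * hB - hD) hC
    -- FTFF : generic, only PB possible
    · refine generic_bound w u hu PB ?_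
      rintro p (rfl | rfl | rfl | rfl) hl
      · rw [line_PA] at hl; exact absurd hl hA
      · rfl
      · rw [line_PC] at hl; exact absurd hl hC
      · rw [line_PD] at hl; exact absurd hl hD
    -- FFTT : contradiction, hB follows
    · have h' : w * (u 0 + u 1) = 0 := by linear_combination hC + hD
      exact absurd ((mul_eq_zero.mp h').resolve_left hw0) hB
    -- FFTF : generic, only PC possible
    · refine generic_bound w u hu (PC w) ?_
      rintro p (rfl | rfl | rfl | rfl) hl
      · rw [line_PA] at hl; exact absurd hl hA
      · rw [line_PB] at hl; exact absurd hl hB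
      · rfl
      · rw [line_PD] at hl; exact absurd hl hD
    -- FFFT : generic, only PD possible
    · refine generic_bound w u hu (PD w) ?_
      rintro p (rfl | rfl | rfl | rfl) hl
      · rw [line_PA] at hl; exact absurd hl hA
      · rw [line_PB] at hl; exact absurd hl hB
      · rw [line_PC] at hl; exact absurd hl hC
      · rfl
    -- FFFF : generic, nothing possible
    · refine generic_bound w u hu PA ?_
      rintro p (rfl | rfl | rfl | rfl) hl
      · rfl
      · rw [line_PB] at hl; exact absurd hl hB
      · rw [line_PC] at hl; exact absurd hl hC
      · rw [line_PD] at hl; exact absurd hl hD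
  · refine ⟨![0, 0, 1], fun h => by simpa using congrFun h 2, ?_⟩
    show {p ∈ (Set.range Pt ∪ {Pinf, PA, PB, PC w, PD w} :
        Set (Projectivization F (Fin 3 → F))) |
      ∑ i, p.rep i * ![(0 : F), 0, 1] i = 0}.ncard = 3
    have hset : {p ∈ (Set.range Pt ∪ {Pinf, PA, PB, PC w, PD w} :
        Set (Projectivization F (Fin 3 → F))) |
        ∑ i, p.rep i * ![(0 : F), 0, 1] i = 0} = {Pinf, PA, PB} := by
      ext p
      simp only [Set.mem_setOf_eq, Set.mem_union, Set.mem_range, Set.mem_insert_iff,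
        Set.mem_singleton_iff]
      constructor
      · rintro ⟨hp, hl⟩
        rcases hp with (⟨x, rfl⟩ | rfl | rfl | rfl | rfl | rfl)
        · rw [line_Pt] at hl; simp at hl
        · exact Or.inl rfl
        · exact Or.inr (Or.inl rfl)
        · exact Or.inr (Or.inr rfl)
        · rw [line_PC] at hl; simp at hl
        · rw [line_PD] at hl; simp at hl
      · rintro (rfl | rfl | rfl)
        · exact ⟨Or.inr (Or.inl rfl), by rw [line_Pinf]; simp⟩
        · exact ⟨Or.inr (Or.inr (Or.inl rfl)), by rw [line_PA]; simp⟩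
        · exact ⟨Or.inr (Or.inr (Or.inr (Or.inl rfl))), by rw [line_PB]; simp⟩
    rw [hset]
    rw [Set.ncard_insert_of_notMem (by simp [Pinf_ne_PA, Pinf_ne_PB]) (Set.toFinite _),
      Set.ncard_insert_of_notMem (by simp [PA_ne_PB]) (Set.toFinite _), Set.ncard_singleton]
end

section
/- Let q = 2^m ≥ 4, let f be an o-polynomial function on F_q and v ∈ F_q \ {f(x)+x : x ∈ F_q}. Let S be the corresponding (q+5)-point set in PG(2,q) (hyperoval plus (1,1,0), (0,v,1), (v,0,1)). Then the number of lines of PG(2, q) meeting S in exactly 3 points equals (3q + 8)(q − 1)/2 divided by (q−1), i.e., there are exactly (3q+8)/2 such lines; equivalently, the number of nonzero vectors u ∈ F_q³ with #(H_u ∩ S) = 3 equals (3q+8)(q−1)/2. -/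
set_option linter.unusedSectionVars false

namespace Stmt16

variable {F : Type*} [Field F] [Fintype F] [DecidableEq F]

def vec (f : F → F) (v : F) : F ⊕ Fin 5 → Fin 3 → F
  | .inl x => ![f x, x, 1]
  | .inr 0 => ![1, 0, 0]
  | .inr 1 => ![0, 1, 0]
  | .inr 2 => ![1, 1, 0]
  | .inr 3 => ![0, v, 1]
  | .inr 4 => ![v, 0, 1]

lemma vec_ne_zero (f : F → F) (v : F) (d : F ⊕ Fin 5) : vec f v d ≠ 0 := by
  rcases d with x | j
  · intro h; simpa [vec] using congrFun h 2
  · fin_cases j <;> intro h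
    · simpa [vec] using congrFun h 0
    · simpa [vec] using congrFun h 1
    · simpa [vec] using congrFun h 0
    · simpa [vec] using congrFun h 2
    · simpa [vec] using congrFun h 2

lemma phi_inj (f : F → F) (v : F) (hinj : Function.Injective f) (hf0 : f 0 = 0)
    (hv0 : v ≠ 0) :
    Function.Injective (fun d => Projectivization.mk F (vec f v d) (vec_ne_zero f v d)) := by
  intro d e h
  rw [Projectivization.mk_eq_mk_iff] at h
  obtain ⟨a, ha⟩ := h
  have ha' : ∀ i, (a : F) * vec f v e i = vec f v d i := by
    intro i; rw [← ha]; simp [Units.smul_def]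
  have hane : (a : F) ≠ 0 := a.ne_zero
  rcases d with x | j <;> rcases e with y | k
  · -- inl/inl
    have h2 := ha' 2; simp [vec] at h2
    have h1 := ha' 1; rw [h2] at h1; simp [vec] at h1
    simp [h1]
  · -- inl/inr
    exfalso
    have h0 := ha' 0; have h1 := ha' 1; have h2 := ha' 2
    fin_cases k <;> simp [vec] at h0 h1 h2
    · -- k=3: h0 : 0 = f x, h1 : a*v = x (?), h2 : a = 1
      have hx : x = 0 := hinj (by rw [hf0, ← h0])
      rw [h2, hx] at h1
      simp [hv0] at h1
    · -- k=4: h0 : a*v = f x, h1 : 0 = x, h2 : a = 1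
      rw [h2, ← h1, hf0] at h0
      simp [hv0] at h0
  · -- inr/inl
    exfalso
    have h0 := ha' 0; have h1 := ha' 1; have h2 := ha' 2
    fin_cases j <;> simp [vec, hane] at h0 h1 h2
    · -- j=3: h0 : f y = 0, h1 : a*y = v (?), h2 : a = 1
      have hy : y = 0 := hinj (by rw [hf0, h0])
      rw [h2, hy] at h1
      simp [hv0.symm] at h1
    · -- j=4: h0 : a * f y = v, h1 : y = 0, h2 : a = 1
      rw [h2, h1, hf0] at h0
      simp [hv0.symm] at h0
  · -- inr/inr
    fin_cases j <;> fin_cases k <;> (try rfl) <;>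
      (exfalso;
       have h0 := ha' 0; have h1 := ha' 1; have h2 := ha' 2;
       simp [vec, hane, hv0] at h0 h1 h2)


lemma rep_dot (w : Fin 3 → F) (hw : w ≠ 0) (u : Fin 3 → F) :
    (∑ i, (Projectivization.mk F w hw).rep i * u i = 0) ↔ (∑ i, w i * u i = 0) := by
  obtain ⟨a, ha⟩ := (Projectivization.mk_eq_mk_iff F _ w
    (Projectivization.rep_nonzero _) hw).mp (Projectivization.mk_rep _)
  have hrep : ∀ i, (Projectivization.mk F w hw).rep i = (a : F) * w i := by
    intro i; rw [← ha]; simp [Units.smul_def]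
  have : (∑ i, (Projectivization.mk F w hw).rep i * u i)
      = (a : F) * ∑ i, w i * u i := by
    rw [Finset.mul_sum]
    exact Finset.sum_congr rfl fun i _ => by rw [hrep]; ring
  rw [this, mul_eq_zero]
  simp [a.ne_zero]

lemma ncard_filter_eq (f : F → F) (v : F) (hinj : Function.Injective f) (hf0 : f 0 = 0)
    (hv0 : v ≠ 0) (S : Set (Projectivization F (Fin 3 → F)))
    (hrange : S = Set.range (fun d => Projectivization.mk F (vec f v d) (vec_ne_zero f v d)))
    (u : Fin 3 → F) :
    {p ∈ S | ∑ i, p.rep i * u i = 0}.ncard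
      = (Finset.univ.filter (fun d : F ⊕ Fin 5 => ∑ i, vec f v d i * u i = 0)).card := by
  have him : {p ∈ S | ∑ i, p.rep i * u i = 0}
      = (fun d => Projectivization.mk F (vec f v d) (vec_ne_zero f v d)) ''
        {d | ∑ i, vec f v d i * u i = 0} := by
    rw [hrange]; ext p
    constructor
    · rintro ⟨⟨d, rfl⟩, hc⟩
      exact ⟨d, (rep_dot _ _ u).mp hc, rfl⟩
    · rintro ⟨d, hd, rfl⟩
      exact ⟨⟨d, rfl⟩, (rep_dot _ _ u).mpr hd⟩
  rw [him, Set.ncard_image_of_injective _ (phi_inj f v hinj hf0 hv0),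
    Set.ncard_eq_toFinset_card', Set.toFinset_setOf]

lemma count_eval (f : F → F) (v : F) (u : Fin 3 → F) :
    (Finset.univ.filter (fun d : F ⊕ Fin 5 => ∑ i, vec f v d i * u i = 0)).card
    = (Finset.univ.filter (fun x : F => f x * u 0 + x * u 1 + u 2 = 0)).card
      + (((if u 0 = 0 then 1 else 0) + (if u 1 = 0 then 1 else 0)
      + (if u 0 + u 1 = 0 then 1 else 0)
      + (if v * u 1 + u 2 = 0 then 1 else 0) + (if v * u 0 + u 2 = 0 then 1 else 0)) : ℕ) := by
  rw [Finset.card_filter, Fintype.sum_sum_type, Finset.card_filter, Fin.sum_univ_five]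
  simp [vec, Fin.sum_univ_three]


section Count

variable (f : F → F) (v : F)

/-- affine point count of the line u -/
def nA (f : F → F) (u : Fin 3 → F) : ℕ :=
  (Finset.univ.filter fun x : F => f x * u 0 + x * u 1 + u 2 = 0).card

/-- hyperoval point count of the line u -/
def hc (f : F → F) (u : Fin 3 → F) : ℕ :=
  nA f u + ((if u 0 = 0 then 1 else 0) + (if u 1 = 0 then 1 else 0))

/-- total point count of the line u -/
def N (f : F → F) (v : F) (u : Fin 3 → F) : ℕ :=
  hc f u + ((if u 0 + u 1 = 0 then 1 else 0)
    + (if v * u 1 + u 2 = 0 then 1 else 0) + (if v * u 0 + u 2 = 0 then 1 else 0))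

lemma key_iff (hadd : ∀ x y : F, x + y = 0 ↔ x = y) {a E y T : F} (ha : a ≠ 0)
    (hT : T = a * (E + y)) : (T = 0) ↔ (E = y) := by
  rw [hT, mul_eq_zero]
  simp only [ha, false_or]
  exact hadd E y

lemma eq_zero_iff3 (u : Fin 3 → F) : u = 0 ↔ u 0 = 0 ∧ u 1 = 0 ∧ u 2 = 0 := by
  constructor
  · rintro rfl; simp
  · rintro ⟨h0, h1, h2⟩; funext i; fin_cases i <;> assumption

lemma card_fiber_one (hbij : Function.Bijective f) (c : F) :
    (Finset.univ.filter fun x : F => f x = c).card = 1 := by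
  obtain ⟨x0, hx0⟩ := hbij.surjective c
  rw [show (Finset.univ.filter fun x : F => f x = c) = {x0} from ?_, Finset.card_singleton]
  ext y
  simp only [Finset.mem_filter, Finset.mem_univ, true_and, Finset.mem_singleton]
  constructor
  · intro h; exact hbij.injective (h.trans hx0.symm)
  · rintro rfl; exact hx0

lemma hneg (htwo : (2 : F) = 0) : ∀ y : F, -y = y := by
  intro y
  rw [neg_eq_iff_add_eq_zero, show y + y = 2 * y by ring, htwo, zero_mul]

lemma hadd' (htwo : (2 : F) = 0) : ∀ x y : F, x + y = 0 ↔ x = y := by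
  intro x y
  rw [add_eq_zero_iff_eq_neg, hneg htwo]

/-- a nonzero line meets the hyperoval in 0 or 2 points -/
lemma hyperoval_count (hbij : Function.Bijective f)
    (h2to1 : ∀ u : F, u ≠ 0 → ∀ y : F,
      (Finset.univ.filter (fun x : F => f x + u * x = y)).card = 0 ∨
      (Finset.univ.filter (fun x : F => f x + u * x = y)).card = 2)
    (htwo : (2 : F) = 0) (u : Fin 3 → F) (hu : u ≠ 0) :
    hc f u = 0 ∨ hc f u = 2 := by
  have hadd := hadd' (F := F) htwo
  by_cases h0 : u 0 = 0 <;> by_cases h1 : u 1 = 0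
  · -- both zero: u 2 ≠ 0, no affine points
    have h2 : u 2 ≠ 0 := by
      intro h2; exact hu ((eq_zero_iff3 u).mpr ⟨h0, h1, h2⟩)
    right
    have : nA f u = 0 := by
      rw [nA, Finset.card_eq_zero, Finset.filter_eq_empty_iff]
      intro x _
      rw [h0, h1]; simpa using h2
    rw [hc, this, if_pos h0, if_pos h1]
  · -- u 0 = 0, u 1 ≠ 0 : one affine point
    right
    have : nA f u = 1 := by
      have he : (Finset.univ.filter fun x : F => f x * u 0 + x * u 1 + u 2 = 0)
          = Finset.univ.filter fun x : F => x = u 2 * (u 1)⁻¹ := by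
        refine Finset.filter_congr (fun x _ => ?_)
        rw [h0, mul_zero, zero_add]
        rw [key_iff hadd h1 (show x * u 1 + u 2 = u 1 * (x + u 2 * (u 1)⁻¹) by
          field_simp; try ring)]
      rw [nA, he, Finset.filter_eq' Finset.univ (u 2 * (u 1)⁻¹)]
      simp
    rw [hc, this, if_pos h0, if_neg h1]
  · -- u 0 ≠ 0, u 1 = 0 : one affine point
    right
    have : nA f u = 1 := by
      have he : (Finset.univ.filter fun x : F => f x * u 0 + x * u 1 + u 2 = 0)
          = Finset.univ.filter fun x : F => f x = u 2 * (u 0)⁻¹ := by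
        refine Finset.filter_congr (fun x _ => ?_)
        rw [h1, mul_zero, add_zero]
        rw [key_iff hadd h0 (show f x * u 0 + u 2 = u 0 * (f x + u 2 * (u 0)⁻¹) by
          field_simp; try ring)]
      rw [nA, he, card_fiber_one f hbij (u 2 * (u 0)⁻¹)]
    rw [hc, this, if_neg h0, if_pos h1]
  · -- generic line
    have : nA f u = (Finset.univ.filter fun x : F =>
        f x + (u 1 * (u 0)⁻¹) * x = u 2 * (u 0)⁻¹).card := by
      rw [nA]
      congr 1
      refine Finset.filter_congr (fun x _ => ?_)
      rw [key_iff hadd h0 (show f x * u 0 + x * u 1 + u 2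
        = u 0 * ((f x + (u 1 * (u 0)⁻¹) * x) + u 2 * (u 0)⁻¹) by field_simp; try ring)]
    have hs : u 1 * (u 0)⁻¹ ≠ 0 := mul_ne_zero h1 (inv_ne_zero h0)
    rcases h2to1 _ hs (u 2 * (u 0)⁻¹) with h | h
    · left; rw [hc, this, h, if_neg h0, if_neg h1]
    · right; rw [hc, this, h, if_neg h0, if_neg h1]

/-- the image of x ↦ f x + x has size q/2 -/
lemma im_card
    (h2to1 : ∀ u : F, u ≠ 0 → ∀ y : F,
      (Finset.univ.filter (fun x : F => f x + u * x = y)).card = 0 ∨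
      (Finset.univ.filter (fun x : F => f x + u * x = y)).card = 2) :
    2 * (Finset.univ.filter fun y : F => ∃ x : F, f x + 1 * x = y).card
      = Fintype.card F := by
  have base : ∑ y : F, (Finset.univ.filter fun x : F => f x + 1 * x = y).card
      = Fintype.card F := by
    rw [← Finset.card_univ]
    exact (Finset.card_eq_sum_card_fiberwise
      (f := fun x : F => f x + 1 * x) (fun x _ => Finset.mem_univ _)).symm
  rw [← base, ← Finset.sum_filter_add_sum_filter_not Finset.univ
    (fun y : F => ∃ x : F, f x + 1 * x = y)]
  have hz : ∑ y ∈ Finset.univ.filter (fun y : F => ¬ ∃ x : F, f x + 1 * x = y),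
      (Finset.univ.filter fun x : F => f x + 1 * x = y).card = 0 := by
    refine Finset.sum_eq_zero (fun y hy => ?_)
    simp only [Finset.mem_filter] at hy
    rw [Finset.card_eq_zero, Finset.filter_eq_empty_iff]
    intro x _ hx
    exact hy.2 ⟨x, hx⟩
  have h2 : ∑ y ∈ Finset.univ.filter (fun y : F => ∃ x : F, f x + 1 * x = y),
      (Finset.univ.filter fun x : F => f x + 1 * x = y).card
      = 2 * (Finset.univ.filter fun y : F => ∃ x : F, f x + 1 * x = y).card := by
    rw [Finset.sum_congr rfl (fun y hy => ?_), Finset.sum_const, smul_eq_mul, mul_comm]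
    simp only [Finset.mem_filter] at hy
    rcases h2to1 1 one_ne_zero y with h | h
    · exfalso
      obtain ⟨x, hx⟩ := hy.2
      have : x ∈ Finset.univ.filter (fun x : F => f x + 1 * x = y) := by
        simpa using hx
      rw [Finset.card_eq_zero] at h
      rw [h] at this
      exact absurd this (Finset.notMem_empty x)
    · exact h
  rw [hz, h2, add_zero]

/-- double count for secants through (0,v,1) -/
lemma dc2 (hbij : Function.Bijective f) (hf0 : f 0 = 0)
    (hvim : ∀ x : F, f x + x ≠ v) (hv0 : v ≠ 0) (htwo : (2 : F) = 0) :
    ∑ s ∈ Finset.univ.filter (fun s : F => s ≠ 0 ∧ s ≠ 1),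
      (Finset.univ.filter fun x : F => f x + s * x = v * s).card
      = Fintype.card F - 2 := by
  have hadd := hadd' (F := F) htwo
  have swap : ∑ s ∈ Finset.univ.filter (fun s : F => s ≠ 0 ∧ s ≠ 1),
      (Finset.univ.filter fun x : F => f x + s * x = v * s).card
      = ∑ x : F, ((Finset.univ.filter (fun s : F => s ≠ 0 ∧ s ≠ 1)).filter
          (fun s : F => f x + s * x = v * s)).card := by
    simp_rw [Finset.card_filter]
    exact Finset.sum_comm
  rw [swap]
  have heval : ∀ x : F, ((Finset.univ.filter (fun s : F => s ≠ 0 ∧ s ≠ 1)).filter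
      (fun s : F => f x + s * x = v * s)).card = if x ≠ 0 ∧ x ≠ v then 1 else 0 := by
    intro x
    by_cases hx0 : x = 0
    · subst hx0
      rw [if_neg (by simp), Finset.card_eq_zero, Finset.filter_eq_empty_iff]
      intro s hs heq
      simp only [Finset.mem_filter] at hs
      rw [hf0, zero_add, mul_zero] at heq
      exact hs.2.1 ((mul_eq_zero.mp (by rw [← heq])).resolve_left hv0)
    · by_cases hxv : x = v
      · subst hxv
        rw [if_neg (by tauto), Finset.card_eq_zero, Finset.filter_eq_empty_iff]
        intro s hs heq
        have hfx : f x ≠ 0 := fun h =>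
          hx0 (hbij.injective (h.trans hf0.symm))
        apply hfx
        linear_combination heq
      · rw [if_pos ⟨hx0, hxv⟩]
        have hxvne : x + v ≠ 0 := fun h => hxv (hadd x v |>.mp h)
        have hfx : f x ≠ 0 := fun h => hx0 (hbij.injective (h.trans hf0.symm))
        have : ((Finset.univ.filter (fun s : F => s ≠ 0 ∧ s ≠ 1)).filter
            (fun s : F => f x + s * x = v * s)) = {f x * (x + v)⁻¹} := by
          ext s
          simp only [Finset.mem_filter, Finset.mem_univ, true_and,
            Finset.mem_singleton]
          constructor
          · rintro ⟨-, heq⟩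
            rw [eq_mul_inv_iff_mul_eq₀ hxvne]
            linear_combination (-1 : F) * heq + (s * x) * htwo
          · rintro rfl
            refine ⟨⟨mul_ne_zero hfx (inv_ne_zero hxvne), fun h1 => ?_⟩, ?_⟩
            · apply hvim x
              have hfxv : f x = x + v := by
                field_simp at h1
                exact h1
              linear_combination hfxv + x * htwo
            · field_simp
              linear_combination x * htwo
        rw [this, Finset.card_singleton]
  rw [Finset.sum_congr rfl (fun x _ => heval x), ← Finset.card_filter]
  have : (Finset.univ.filter fun x : F => x ≠ 0 ∧ x ≠ v)
      = Finset.univ \ {0, v} := by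
    ext x; simp [not_or]
  rw [this, Finset.card_sdiff_of_subset (Finset.subset_univ _), Finset.card_univ]
  congr 1
  rw [Finset.card_insert_of_notMem (by simp [(Ne.symm hv0)]), Finset.card_singleton]

/-- double count for secants through (v,0,1) -/
lemma dc3 (hbij : Function.Bijective f) (hf0 : f 0 = 0)
    (hvim : ∀ x : F, f x + x ≠ v) (hv0 : v ≠ 0) (htwo : (2 : F) = 0) :
    ∑ s ∈ Finset.univ.filter (fun s : F => s ≠ 0 ∧ s ≠ 1),
      (Finset.univ.filter fun x : F => f x + s * x = v).card
      = Fintype.card F - 2 := by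
  have swap : ∑ s ∈ Finset.univ.filter (fun s : F => s ≠ 0 ∧ s ≠ 1),
      (Finset.univ.filter fun x : F => f x + s * x = v).card
      = ∑ x : F, ((Finset.univ.filter (fun s : F => s ≠ 0 ∧ s ≠ 1)).filter
          (fun s : F => f x + s * x = v)).card := by
    simp_rw [Finset.card_filter]
    exact Finset.sum_comm
  rw [swap]
  have heval : ∀ x : F, ((Finset.univ.filter (fun s : F => s ≠ 0 ∧ s ≠ 1)).filter
      (fun s : F => f x + s * x = v)).card = if x ≠ 0 ∧ f x ≠ v then 1 else 0 := by
    intro x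
    by_cases hx0 : x = 0
    · subst hx0
      rw [if_neg (by simp), Finset.card_eq_zero, Finset.filter_eq_empty_iff]
      intro s hs heq
      rw [hf0, zero_add, mul_zero] at heq
      exact hv0 heq.symm
    · by_cases hfxv : f x = v
      · rw [if_neg (by tauto), Finset.card_eq_zero, Finset.filter_eq_empty_iff]
        intro s hs heq
        simp only [Finset.mem_filter] at hs
        apply hs.2.1
        have hsx : s * x = 0 := by linear_combination heq - hfxv
        exact (mul_eq_zero.mp hsx).resolve_right hx0
      · rw [if_pos ⟨hx0, hfxv⟩]
        have : ((Finset.univ.filter (fun s : F => s ≠ 0 ∧ s ≠ 1)).filter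
            (fun s : F => f x + s * x = v)) = {(v + f x) * x⁻¹} := by
          ext s
          simp only [Finset.mem_filter, Finset.mem_univ, true_and,
            Finset.mem_singleton]
          constructor
          · rintro ⟨-, heq⟩
            rw [eq_mul_inv_iff_mul_eq₀ hx0]
            linear_combination heq - f x * htwo
          · rintro rfl
            refine ⟨⟨fun h0 => ?_, fun h1 => ?_⟩, ?_⟩
            · apply hfxv
              rw [mul_eq_zero] at h0
              rcases h0 with h0 | h0
              · linear_combination h0 - v * htwo
              · exact absurd h0 (inv_ne_zero hx0)
            · apply hvim x
              have hfx : v + f x = x := by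
                field_simp at h1
                linear_combination h1
              linear_combination hfx + (x - v) * htwo
            · field_simp
              linear_combination f x * htwo
        rw [this, Finset.card_singleton]
  rw [Finset.sum_congr rfl (fun x _ => heval x), ← Finset.card_filter]
  obtain ⟨x0, hx0⟩ := hbij.surjective v
  have hx0ne : x0 ≠ 0 := by
    intro h; rw [h, hf0] at hx0; exact hv0 hx0.symm
  have : (Finset.univ.filter fun x : F => x ≠ 0 ∧ f x ≠ v)
      = Finset.univ \ {0, x0} := by
    ext x
    simp only [Finset.mem_filter, Finset.mem_univ, true_and, Finset.mem_sdiff,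
      Finset.mem_insert, Finset.mem_singleton, not_or]
    constructor
    · rintro ⟨h1, h2⟩
      exact ⟨h1, fun h => h2 (h ▸ hx0)⟩
    · rintro ⟨h1, h2⟩
      exact ⟨h1, fun h => h2 (hbij.injective (h.trans hx0.symm))⟩
  rw [this, Finset.card_sdiff_of_subset (Finset.subset_univ _), Finset.card_univ]
  congr 1
  rw [Finset.card_insert_of_notMem (by simp [(Ne.symm hx0ne)]), Finset.card_singleton]

lemma card_ne_zero : (Finset.univ.filter fun a : F => a ≠ 0).card = Fintype.card F - 1 := by
  rw [Finset.filter_ne', Finset.card_erase_of_mem (Finset.mem_univ _), Finset.card_univ]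

lemma haddself (htwo : (2 : F) = 0) (a : F) : a + a = 0 := by
  rw [show a + a = 2 * a by ring, htwo, zero_mul]

lemma cardT0 (hvim : ∀ x : F, f x + x ≠ v) (hv0 : v ≠ 0) (htwo : (2 : F) = 0) :
    (Finset.univ.filter fun u : Fin 3 → F =>
      u ≠ 0 ∧ u 0 + u 1 = 0 ∧ v * u 1 + u 2 = 0 ∧ v * u 0 + u 2 = 0).card
    = Fintype.card F - 1 := by
  have hadd := hadd' (F := F) htwo
  rw [← card_ne_zero (F := F)]
  apply Finset.card_nbij' (fun u => u 0) (fun a => ![a, a, v * a])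
  · intro u hu
    simp only [Finset.mem_coe, Finset.mem_filter, Finset.mem_univ, true_and] at hu ⊢
    obtain ⟨hne, c1, c2, c3⟩ := hu
    intro h0
    apply hne
    have h1 : u 1 = 0 := by rw [← (hadd _ _).mp c1, h0]
    have h2 : u 2 = 0 := by rw [← (hadd _ _).mp c2, h1, mul_zero]
    exact (eq_zero_iff3 u).mpr ⟨h0, h1, h2⟩
  · intro a ha
    simp only [Finset.mem_coe, Finset.mem_filter, Finset.mem_univ, true_and] at ha ⊢
    refine ⟨fun h => ha (by simpa using congrFun h 0), ?_, ?_, ?_⟩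
    · simp [haddself htwo]
    · simp [haddself htwo]
    · simp [haddself htwo]
  · intro u hu
    simp only [Finset.mem_coe, Finset.mem_filter, Finset.mem_univ, true_and] at hu
    obtain ⟨hne, c1, c2, c3⟩ := hu
    funext i
    fin_cases i
    · simp
    · simpa using ((hadd _ _).mp c1)
    · simpa using (((hadd _ _).mp c2).symm.trans (congrArg _ ((hadd _ _).mp c1).symm)).symm
  · intro a ha
    simp

lemma cardT1 (hbij : Function.Bijective f)
    (h2to1 : ∀ u : F, u ≠ 0 → ∀ y : F,
      (Finset.univ.filter (fun x : F => f x + u * x = y)).card = 0 ∨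
      (Finset.univ.filter (fun x : F => f x + u * x = y)).card = 2)
    (hvim : ∀ x : F, f x + x ≠ v) (hv0 : v ≠ 0) (htwo : (2 : F) = 0) :
    (Finset.univ.filter fun u : Fin 3 → F =>
      u 0 + u 1 = 0 ∧ v * u 1 + u 2 ≠ 0 ∧ hc f u = 2).card
    = (Fintype.card F - 1)
      + (Fintype.card F - 1) * (Finset.univ.filter fun y : F => ∃ x : F, f x + 1 * x = y).card := by
  have hadd := hadd' (F := F) htwo
  rw [← Finset.card_filter_add_card_filter_not (p := fun u : Fin 3 → F => u 0 = 0),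
    Finset.filter_filter, Finset.filter_filter]
  congr 1
  · -- slice u 0 = 0 : the line z = 0
    rw [← card_ne_zero (F := F)]
    apply Finset.card_nbij' (fun u => u 2) (fun c => ![0, 0, c])
    · intro u hu
      simp only [Finset.mem_coe, Finset.mem_filter, Finset.mem_univ, true_and] at hu ⊢
      obtain ⟨⟨c1, c2, _⟩, h0⟩ := hu
      intro h2
      apply c2
      rw [← (hadd _ _).mp c1, h0, mul_zero, zero_add, h2]
    · intro c hc'
      simp only [Finset.mem_coe, Finset.mem_filter, Finset.mem_univ, true_and] at hc' ⊢
      have h0 : (![(0:F), 0, c]) 0 = 0 := rfl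
      have h1 : (![(0:F), 0, c]) 1 = 0 := rfl
      have h2 : (![(0:F), 0, c]) 2 = c := rfl
      refine ⟨⟨by rw [h0, h1, add_zero], by rw [h1, h2, mul_zero, zero_add]; exact hc', ?_⟩, h0⟩
      rw [hc, nA, h0, h1, h2]
      have : (Finset.univ.filter fun x : F => f x * 0 + x * 0 + c = 0) = ∅ := by
        rw [Finset.filter_eq_empty_iff]
        intro x _
        simpa using hc'
      rw [this]
      simp
    · intro u hu
      simp only [Finset.mem_coe, Finset.mem_filter, Finset.mem_univ, true_and] at hu
      obtain ⟨⟨c1, c2, _⟩, h0⟩ := hu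
      have h1 : u 1 = 0 := by rw [← (hadd _ _).mp c1, h0]
      funext i
      fin_cases i
      · simpa using h0.symm
      · simpa using h1.symm
      · simp
    · intro c hc'
      simp
  · -- slice u 0 ≠ 0
    rw [← card_ne_zero (F := F), ← Finset.card_product]
    apply Finset.card_nbij' (fun u => (u 0, u 2 * (u 0)⁻¹))
      (fun p => ![p.1, p.1, p.2 * p.1])
    · intro u hu
      simp only [Finset.mem_coe, Finset.mem_filter, Finset.mem_univ, true_and, Finset.mem_product] at hu ⊢
      obtain ⟨⟨c1, c2, hcnt⟩, h0⟩ := hu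
      have h1 : u 1 = u 0 := ((hadd _ _).mp c1).symm
      refine ⟨h0, ?_⟩
      have hnA : nA f u = 2 := by
        rw [hc, if_neg h0, if_neg (h1 ▸ h0)] at hcnt
        omega
      have he : (Finset.univ.filter fun x : F => f x * u 0 + x * u 1 + u 2 = 0)
          = Finset.univ.filter fun x : F => f x + 1 * x = u 2 * (u 0)⁻¹ := by
        refine Finset.filter_congr (fun x _ => ?_)
        rw [key_iff hadd h0 (show f x * u 0 + x * u 1 + u 2
          = u 0 * ((f x + 1 * x) + u 2 * (u 0)⁻¹) by rw [h1]; field_simp)]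
      rw [nA, he] at hnA
      have : (Finset.univ.filter fun x : F => f x + 1 * x = u 2 * (u 0)⁻¹).Nonempty := by
        rw [← Finset.card_pos, hnA]; omega
      obtain ⟨x, hx⟩ := this
      simp only [Finset.mem_filter] at hx
      exact ⟨x, hx.2⟩
    · intro p hp
      simp only [Finset.mem_coe, Finset.mem_filter, Finset.mem_univ, true_and, Finset.mem_product] at hp ⊢
      obtain ⟨ha, x0, hx0⟩ := hp
      have h0 : (![p.1, p.1, p.2 * p.1]) 0 = p.1 := rfl
      have h1 : (![p.1, p.1, p.2 * p.1]) 1 = p.1 := rfl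
      have h2 : (![p.1, p.1, p.2 * p.1]) 2 = p.2 * p.1 := rfl
      refine ⟨⟨by rw [h0, h1]; exact haddself htwo _, ?_, ?_⟩, by rw [h0]; exact ha⟩
      · rw [h1, h2]
        intro hz
        have : v + p.2 = 0 := by
          rcases mul_eq_zero.mp (show p.1 * (v + p.2) = 0 by linear_combination hz) with h | h
          · exact absurd h ha
          · exact h
        have hvp : v = p.2 := (hadd _ _).mp this
        apply hvim x0
        rw [hvp, ← hx0]; ring
      · rw [hc, nA, h0, h1, h2]
        simp only [if_neg ha, add_zero]
        have he : (Finset.univ.filter fun x : F => f x * p.1 + x * p.1 + p.2 * p.1 = 0)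
            = Finset.univ.filter fun x : F => f x + 1 * x = p.2 := by
          refine Finset.filter_congr (fun x _ => ?_)
          rw [key_iff hadd ha (show f x * p.1 + x * p.1 + p.2 * p.1
            = p.1 * ((f x + 1 * x) + p.2) by ring)]
        rw [he]
        rcases h2to1 1 one_ne_zero p.2 with h | h
        · exfalso
          have : x0 ∈ Finset.univ.filter fun x : F => f x + 1 * x = p.2 := by
            simpa using hx0
          rw [Finset.card_eq_zero] at h
          rw [h] at this
          exact absurd this (Finset.notMem_empty x0)
        · exact h
    · intro u hu
      simp only [Finset.mem_coe, Finset.mem_filter, Finset.mem_univ, true_and] at hu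
      obtain ⟨⟨c1, c2, hcnt⟩, h0⟩ := hu
      have h1 : u 1 = u 0 := ((hadd _ _).mp c1).symm
      funext i
      fin_cases i
      · simp
      · simpa using h1.symm
      · show u 2 * (u 0)⁻¹ * u 0 = u 2
        field_simp
    · intro p hp
      simp only [Finset.mem_coe, Finset.mem_filter, Finset.mem_univ, true_and, Finset.mem_product] at hp
      have h0 : (![p.1, p.1, p.2 * p.1]) 0 = p.1 := rfl
      have h2 : (![p.1, p.1, p.2 * p.1]) 2 = p.2 * p.1 := rfl
      have : p.2 * p.1 * p.1⁻¹ = p.2 := by rw [mul_assoc, mul_inv_cancel₀ hp.1, mul_one]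
      rw [Prod.ext_iff]
      exact ⟨h0, by show p.2 * p.1 * p.1⁻¹ = p.2; rw [this]⟩

lemma cardT2 (hbij : Function.Bijective f)
    (h2to1 : ∀ u : F, u ≠ 0 → ∀ y : F,
      (Finset.univ.filter (fun x : F => f x + u * x = y)).card = 0 ∨
      (Finset.univ.filter (fun x : F => f x + u * x = y)).card = 2)
    (hvim : ∀ x : F, f x + x ≠ v) (hv0 : v ≠ 0) (htwo : (2 : F) = 0) :
    (Finset.univ.filter fun u : Fin 3 → F =>
      v * u 1 + u 2 = 0 ∧ u 0 + u 1 ≠ 0 ∧ hc f u = 2).card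
    = (Fintype.card F - 1) + ((Fintype.card F - 1)
      + (Fintype.card F - 1) * (Finset.univ.filter fun s : F =>
          (s ≠ 0 ∧ s ≠ 1) ∧ ∃ x : F, f x + s * x = v * s).card) := by
  have hadd := hadd' (F := F) htwo
  rw [← Finset.card_filter_add_card_filter_not (p := fun u : Fin 3 → F => u 0 = 0),
    Finset.filter_filter, Finset.filter_filter]
  congr 1
  · -- slice u 0 = 0
    rw [← card_ne_zero (F := F)]
    apply Finset.card_nbij' (fun u => u 1) (fun b => ![0, b, v * b])
    · intro u hu
      simp only [Finset.mem_coe, Finset.mem_filter, Finset.mem_univ, true_and] at hu ⊢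
      obtain ⟨⟨c2, c1, _⟩, h0⟩ := hu
      intro h1
      exact c1 (by rw [h0, h1, add_zero])
    · intro b hb
      simp only [Finset.mem_coe, Finset.mem_filter, Finset.mem_univ, true_and] at hb ⊢
      have h0 : (![(0:F), b, v * b]) 0 = 0 := rfl
      have h1 : (![(0:F), b, v * b]) 1 = b := rfl
      have h2 : (![(0:F), b, v * b]) 2 = v * b := rfl
      refine ⟨⟨by rw [h1, h2]; exact haddself htwo _,
        by rw [h0, h1, zero_add]; exact hb, ?_⟩, h0⟩
      rw [hc, nA, h0, h1, h2, if_pos rfl, if_neg hb]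
      have he : (Finset.univ.filter fun x : F => f x * 0 + x * b + v * b = 0)
          = Finset.univ.filter fun x : F => x = v := by
        refine Finset.filter_congr (fun x _ => ?_)
        rw [key_iff hadd hb (show f x * 0 + x * b + v * b = b * (x + v) by ring)]
      rw [he, Finset.filter_eq' Finset.univ v]
      simp
    · intro u hu
      simp only [Finset.mem_coe, Finset.mem_filter, Finset.mem_univ, true_and] at hu
      obtain ⟨⟨c2, c1, _⟩, h0⟩ := hu
      funext i
      fin_cases i
      · simpa using h0.symm
      · simp
      · simpa using (hadd _ _).mp c2
    · intro b hb
      simp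
  · -- u 0 ≠ 0, split on u 1 = 0
    rw [← Finset.card_filter_add_card_filter_not (p := fun u : Fin 3 → F => u 1 = 0),
      Finset.filter_filter, Finset.filter_filter]
    congr 1
    · -- u 0 ≠ 0, u 1 = 0
      rw [← card_ne_zero (F := F)]
      apply Finset.card_nbij' (fun u => u 0) (fun a => ![a, 0, 0])
      · intro u hu
        simp only [Finset.mem_coe, Finset.mem_filter, Finset.mem_univ, true_and] at hu ⊢
        exact hu.1.2
      · intro a ha
        simp only [Finset.mem_coe, Finset.mem_filter, Finset.mem_univ, true_and] at ha ⊢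
        have h0 : (![a, (0:F), 0]) 0 = a := rfl
        have h1 : (![a, (0:F), 0]) 1 = 0 := rfl
        have h2 : (![a, (0:F), 0]) 2 = 0 := rfl
        refine ⟨⟨⟨by rw [h1, h2, mul_zero, add_zero], by rw [h0, h1, add_zero]; exact ha, ?_⟩,
          by rw [h0]; exact ha⟩, h1⟩
        rw [hc, nA, h0, h1, h2, if_neg ha, if_pos rfl]
        have he : (Finset.univ.filter fun x : F => f x * a + x * 0 + 0 = 0)
            = Finset.univ.filter fun x : F => f x = 0 := by
          refine Finset.filter_congr (fun x _ => ?_)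
          rw [key_iff hadd ha (show f x * a + x * 0 + 0 = a * (f x + 0) by ring)]
        rw [he, card_fiber_one f hbij 0]
      · intro u hu
        simp only [Finset.mem_coe, Finset.mem_filter, Finset.mem_univ, true_and] at hu
        obtain ⟨⟨⟨c2, c1, _⟩, h0⟩, h1⟩ := hu
        have h2 : u 2 = 0 := by
          have := (hadd _ _).mp c2
          rw [h1, mul_zero] at this
          exact this.symm
        funext i
        fin_cases i
        · simp
        · simpa using h1.symm
        · simpa using h2.symm
      · intro a ha
        simp
    · -- u 0 ≠ 0, u 1 ≠ 0 : generic
      rw [← card_ne_zero (F := F), ← Finset.card_product]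
      apply Finset.card_nbij' (fun u => (u 0, u 1 * (u 0)⁻¹))
        (fun p => ![p.1, p.2 * p.1, v * (p.2 * p.1)])
      · intro u hu
        simp only [Finset.mem_coe, Finset.mem_filter, Finset.mem_univ, true_and, Finset.mem_product] at hu ⊢
        obtain ⟨⟨⟨c2, c1, hcnt⟩, h0⟩, h1⟩ := hu
        refine ⟨h0, ⟨mul_ne_zero h1 (inv_ne_zero h0), fun hs1 => ?_⟩, ?_⟩
        · apply c1
          have hu1 : u 1 = u 0 := by
            field_simp at hs1
            exact hs1
          rw [hu1]; exact haddself htwo _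
        · have hnA : nA f u = 2 := by
            rw [hc, if_neg h0, if_neg h1] at hcnt
            omega
          have he : (Finset.univ.filter fun x : F => f x * u 0 + x * u 1 + u 2 = 0)
              = Finset.univ.filter fun x : F =>
                f x + (u 1 * (u 0)⁻¹) * x = v * (u 1 * (u 0)⁻¹) := by
            refine Finset.filter_congr (fun x _ => ?_)
            rw [key_iff hadd h0 (show f x * u 0 + x * u 1 + u 2
              = u 0 * ((f x + (u 1 * (u 0)⁻¹) * x) + v * (u 1 * (u 0)⁻¹)) by
                rw [← (hadd _ _).mp c2]; field_simp)]
          rw [nA, he] at hnA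
          have hne : (Finset.univ.filter fun x : F =>
              f x + (u 1 * (u 0)⁻¹) * x = v * (u 1 * (u 0)⁻¹)).Nonempty := by
            rw [← Finset.card_pos, hnA]; omega
          obtain ⟨x, hx⟩ := hne
          simp only [Finset.mem_filter] at hx
          exact ⟨x, hx.2⟩
      · intro p hp
        simp only [Finset.mem_coe, Finset.mem_filter, Finset.mem_univ, true_and, Finset.mem_product] at hp ⊢
        obtain ⟨ha, ⟨hs0, hs1⟩, x0, hx0⟩ := hp
        have h0 : (![p.1, p.2 * p.1, v * (p.2 * p.1)]) 0 = p.1 := rfl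
        have h1 : (![p.1, p.2 * p.1, v * (p.2 * p.1)]) 1 = p.2 * p.1 := rfl
        have h2 : (![p.1, p.2 * p.1, v * (p.2 * p.1)]) 2 = v * (p.2 * p.1) := rfl
        have hsa : p.2 * p.1 ≠ 0 := mul_ne_zero hs0 ha
        refine ⟨⟨⟨by rw [h1, h2]; exact haddself htwo _, ?_, ?_⟩, by rw [h0]; exact ha⟩,
          by rw [h1]; exact hsa⟩
        · rw [h0, h1]
          intro hz
          apply hs1
          have : p.1 * (1 + p.2) = 0 := by linear_combination hz
          rcases mul_eq_zero.mp this with h | h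
          · exact absurd h ha
          · exact ((hadd _ _).mp h).symm
        · rw [hc, nA, h0, h1, h2, if_neg ha, if_neg hsa]
          have he : (Finset.univ.filter fun x : F =>
              f x * p.1 + x * (p.2 * p.1) + v * (p.2 * p.1) = 0)
              = Finset.univ.filter fun x : F => f x + p.2 * x = v * p.2 := by
            refine Finset.filter_congr (fun x _ => ?_)
            rw [key_iff hadd ha (show f x * p.1 + x * (p.2 * p.1) + v * (p.2 * p.1)
              = p.1 * ((f x + p.2 * x) + v * p.2) by ring)]
          rw [he]
          rcases h2to1 p.2 hs0 (v * p.2) with h | h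
          · exfalso
            have : x0 ∈ Finset.univ.filter fun x : F => f x + p.2 * x = v * p.2 := by
              simpa using hx0
            rw [Finset.card_eq_zero] at h
            rw [h] at this
            exact absurd this (Finset.notMem_empty x0)
          · rw [h]
      · intro u hu
        simp only [Finset.mem_coe, Finset.mem_filter, Finset.mem_univ, true_and] at hu
        obtain ⟨⟨⟨c2, c1, hcnt⟩, h0⟩, h1⟩ := hu
        have key : u 1 * (u 0)⁻¹ * u 0 = u 1 := by
          rw [mul_assoc, inv_mul_cancel₀ h0, mul_one]
        funext i
        fin_cases i
        · simp
        · simpa using key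
        · show v * (u 1 * (u 0)⁻¹ * u 0) = u 2
          rw [key]
          exact (hadd _ _).mp c2
      · intro p hp
        simp only [Finset.mem_coe, Finset.mem_filter, Finset.mem_univ, true_and, Finset.mem_product] at hp
        have key : p.2 * p.1 * p.1⁻¹ = p.2 := by
          rw [mul_assoc, mul_inv_cancel₀ hp.1, mul_one]
        rw [Prod.ext_iff]
        exact ⟨rfl, by show p.2 * p.1 * p.1⁻¹ = p.2; exact key⟩

lemma cardT3 (hbij : Function.Bijective f)
    (h2to1 : ∀ u : F, u ≠ 0 → ∀ y : F,
      (Finset.univ.filter (fun x : F => f x + u * x = y)).card = 0 ∨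
      (Finset.univ.filter (fun x : F => f x + u * x = y)).card = 2)
    (hvim : ∀ x : F, f x + x ≠ v) (hv0 : v ≠ 0) (htwo : (2 : F) = 0) :
    (Finset.univ.filter fun u : Fin 3 → F =>
      v * u 0 + u 2 = 0 ∧ u 0 + u 1 ≠ 0 ∧ v * u 1 + u 2 ≠ 0 ∧ hc f u = 2).card
    = (Fintype.card F - 1) + ((Fintype.card F - 1)
      + (Fintype.card F - 1) * (Finset.univ.filter fun s : F =>
          (s ≠ 0 ∧ s ≠ 1) ∧ ∃ x : F, f x + s * x = v).card) := by
  have hadd := hadd' (F := F) htwo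
  rw [← Finset.card_filter_add_card_filter_not (p := fun u : Fin 3 → F => u 1 = 0),
    Finset.filter_filter, Finset.filter_filter]
  congr 1
  · -- slice u 1 = 0
    rw [← card_ne_zero (F := F)]
    apply Finset.card_nbij' (fun u => u 0) (fun a => ![a, 0, v * a])
    · intro u hu
      simp only [Finset.mem_coe, Finset.mem_filter, Finset.mem_univ, true_and] at hu ⊢
      obtain ⟨⟨c3, c1, _, _⟩, h1⟩ := hu
      intro h0
      exact c1 (by rw [h0, h1, add_zero])
    · intro a ha
      simp only [Finset.mem_coe, Finset.mem_filter, Finset.mem_univ, true_and] at ha ⊢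
      have h0 : (![a, (0:F), v * a]) 0 = a := rfl
      have h1 : (![a, (0:F), v * a]) 1 = 0 := rfl
      have h2 : (![a, (0:F), v * a]) 2 = v * a := rfl
      refine ⟨⟨by rw [h0, h2]; exact haddself htwo _,
        by rw [h0, h1, add_zero]; exact ha,
        by rw [h1, h2, mul_zero, zero_add]; exact mul_ne_zero hv0 ha, ?_⟩, h1⟩
      rw [hc, nA, h0, h1, h2, if_neg ha, if_pos rfl]
      have he : (Finset.univ.filter fun x : F => f x * a + x * 0 + v * a = 0)
          = Finset.univ.filter fun x : F => f x = v := by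
        refine Finset.filter_congr (fun x _ => ?_)
        rw [key_iff hadd ha (show f x * a + x * 0 + v * a = a * (f x + v) by ring)]
      rw [he, card_fiber_one f hbij v]
    · intro u hu
      simp only [Finset.mem_coe, Finset.mem_filter, Finset.mem_univ, true_and] at hu
      obtain ⟨⟨c3, c1, _, _⟩, h1⟩ := hu
      funext i
      fin_cases i
      · simp
      · simpa using h1.symm
      · simpa using (hadd _ _).mp c3
    · intro a ha
      simp
  · -- u 1 ≠ 0, split on u 0 = 0
    rw [← Finset.card_filter_add_card_filter_not (p := fun u : Fin 3 → F => u 0 = 0),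
      Finset.filter_filter, Finset.filter_filter]
    congr 1
    · -- u 1 ≠ 0, u 0 = 0
      rw [← card_ne_zero (F := F)]
      apply Finset.card_nbij' (fun u => u 1) (fun b => ![0, b, 0])
      · intro u hu
        simp only [Finset.mem_coe, Finset.mem_filter, Finset.mem_univ, true_and] at hu ⊢
        exact hu.1.2
      · intro b hb
        simp only [Finset.mem_coe, Finset.mem_filter, Finset.mem_univ, true_and] at hb ⊢
        have h0 : (![(0:F), b, 0]) 0 = 0 := rfl
        have h1 : (![(0:F), b, 0]) 1 = b := rfl
        have h2 : (![(0:F), b, 0]) 2 = 0 := rfl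
        refine ⟨⟨⟨by rw [h0, h2, mul_zero, add_zero], by rw [h0, h1, zero_add]; exact hb,
          by rw [h1, h2, add_zero]; exact mul_ne_zero hv0 hb, ?_⟩, by rw [h1]; exact hb⟩, h0⟩
        rw [hc, nA, h0, h1, h2, if_pos rfl, if_neg hb]
        have he : (Finset.univ.filter fun x : F => f x * 0 + x * b + 0 = 0)
            = Finset.univ.filter fun x : F => x = 0 := by
          refine Finset.filter_congr (fun x _ => ?_)
          rw [key_iff hadd hb (show f x * 0 + x * b + 0 = b * (x + 0) by ring)]
        rw [he, Finset.filter_eq' Finset.univ (0 : F)]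
        simp
      · intro u hu
        simp only [Finset.mem_coe, Finset.mem_filter, Finset.mem_univ, true_and] at hu
        obtain ⟨⟨⟨c3, c1, c2, _⟩, h1⟩, h0⟩ := hu
        have h2 : u 2 = 0 := by
          have := (hadd _ _).mp c3
          rw [h0, mul_zero] at this
          exact this.symm
        funext i
        fin_cases i
        · simpa using h0.symm
        · simp
        · simpa using h2.symm
      · intro b hb
        simp
    · -- u 0 ≠ 0, u 1 ≠ 0 : generic
      rw [← card_ne_zero (F := F), ← Finset.card_product]
      apply Finset.card_nbij' (fun u => (u 0, u 1 * (u 0)⁻¹))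
        (fun p => ![p.1, p.2 * p.1, v * p.1])
      · intro u hu
        simp only [Finset.mem_coe, Finset.mem_filter, Finset.mem_univ, true_and, Finset.mem_product] at hu ⊢
        obtain ⟨⟨⟨c3, c1, c2, hcnt⟩, h1⟩, h0⟩ := hu
        refine ⟨h0, ⟨mul_ne_zero h1 (inv_ne_zero h0), fun hs1 => ?_⟩, ?_⟩
        · apply c1
          have hu1 : u 1 = u 0 := by
            field_simp at hs1
            exact hs1
          rw [hu1]; exact haddself htwo _
        · have hnA : nA f u = 2 := by
            rw [hc, if_neg h0, if_neg h1] at hcnt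
            omega
          have he : (Finset.univ.filter fun x : F => f x * u 0 + x * u 1 + u 2 = 0)
              = Finset.univ.filter fun x : F =>
                f x + (u 1 * (u 0)⁻¹) * x = v := by
            refine Finset.filter_congr (fun x _ => ?_)
            rw [key_iff hadd h0 (show f x * u 0 + x * u 1 + u 2
              = u 0 * ((f x + (u 1 * (u 0)⁻¹) * x) + v) by
                rw [← (hadd _ _).mp c3]; field_simp)]
          rw [nA, he] at hnA
          have hne : (Finset.univ.filter fun x : F =>
              f x + (u 1 * (u 0)⁻¹) * x = v).Nonempty := by
            rw [← Finset.card_pos, hnA]; omega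
          obtain ⟨x, hx⟩ := hne
          simp only [Finset.mem_filter] at hx
          exact ⟨x, hx.2⟩
      · intro p hp
        simp only [Finset.mem_coe, Finset.mem_filter, Finset.mem_univ, true_and, Finset.mem_product] at hp ⊢
        obtain ⟨ha, ⟨hs0, hs1⟩, x0, hx0⟩ := hp
        have h0 : (![p.1, p.2 * p.1, v * p.1]) 0 = p.1 := rfl
        have h1 : (![p.1, p.2 * p.1, v * p.1]) 1 = p.2 * p.1 := rfl
        have h2 : (![p.1, p.2 * p.1, v * p.1]) 2 = v * p.1 := rfl
        have hsa : p.2 * p.1 ≠ 0 := mul_ne_zero hs0 ha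
        refine ⟨⟨⟨by rw [h0, h2]; exact haddself htwo _, ?_, ?_, ?_⟩,
          by rw [h1]; exact hsa⟩, by rw [h0]; exact ha⟩
        · rw [h0, h1]
          intro hz
          apply hs1
          have : p.1 * (1 + p.2) = 0 := by linear_combination hz
          rcases mul_eq_zero.mp this with h | h
          · exact absurd h ha
          · exact ((hadd _ _).mp h).symm
        · rw [h1, h2]
          intro hz
          apply hs1
          have : (v * p.1) * (p.2 + 1) = 0 := by linear_combination hz
          rcases mul_eq_zero.mp this with h | h
          · exact absurd h (mul_ne_zero hv0 ha)
          · exact (hadd _ _).mp h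
        · rw [hc, nA, h0, h1, h2, if_neg ha, if_neg hsa]
          have he : (Finset.univ.filter fun x : F =>
              f x * p.1 + x * (p.2 * p.1) + v * p.1 = 0)
              = Finset.univ.filter fun x : F => f x + p.2 * x = v := by
            refine Finset.filter_congr (fun x _ => ?_)
            rw [key_iff hadd ha (show f x * p.1 + x * (p.2 * p.1) + v * p.1
              = p.1 * ((f x + p.2 * x) + v) by ring)]
          rw [he]
          rcases h2to1 p.2 hs0 v with h | h
          · exfalso
            have : x0 ∈ Finset.univ.filter fun x : F => f x + p.2 * x = v := by
              simpa using hx0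
            rw [Finset.card_eq_zero] at h
            rw [h] at this
            exact absurd this (Finset.notMem_empty x0)
          · rw [h]
      · intro u hu
        simp only [Finset.mem_coe, Finset.mem_filter, Finset.mem_univ, true_and] at hu
        obtain ⟨⟨⟨c3, c1, c2, hcnt⟩, h1⟩, h0⟩ := hu
        have key : u 1 * (u 0)⁻¹ * u 0 = u 1 := by
          rw [mul_assoc, inv_mul_cancel₀ h0, mul_one]
        funext i
        fin_cases i
        · simp
        · simpa using key
        · simpa using (hadd _ _).mp c3
      · intro p hp
        simp only [Finset.mem_coe, Finset.mem_filter, Finset.mem_univ, true_and, Finset.mem_product] at hp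
        have key : p.2 * p.1 * p.1⁻¹ = p.2 := by
          rw [mul_assoc, mul_inv_cancel₀ hp.1, mul_one]
        rw [Prod.ext_iff]
        exact ⟨rfl, by show p.2 * p.1 * p.1⁻¹ = p.2; exact key⟩

lemma two_mul_filter_exists
    (h2to1 : ∀ u : F, u ≠ 0 → ∀ y : F,
      (Finset.univ.filter (fun x : F => f x + u * x = y)).card = 0 ∨
      (Finset.univ.filter (fun x : F => f x + u * x = y)).card = 2)
    (g : F → F) :
    2 * (Finset.univ.filter fun s : F => (s ≠ 0 ∧ s ≠ 1) ∧ ∃ x : F, f x + s * x = g s).card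
    = ∑ s ∈ Finset.univ.filter (fun s : F => s ≠ 0 ∧ s ≠ 1),
        (Finset.univ.filter fun x : F => f x + s * x = g s).card := by
  rw [← Finset.filter_filter,
    ← Finset.sum_filter_add_sum_filter_not
      (Finset.univ.filter (fun s : F => s ≠ 0 ∧ s ≠ 1))
      (fun s : F => ∃ x : F, f x + s * x = g s)]
  have hz : ∑ s ∈ (Finset.univ.filter (fun s : F => s ≠ 0 ∧ s ≠ 1)).filter
      (fun s : F => ¬ ∃ x : F, f x + s * x = g s),
      (Finset.univ.filter fun x : F => f x + s * x = g s).card = 0 := by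
    refine Finset.sum_eq_zero (fun y hy => ?_)
    simp only [Finset.mem_filter] at hy
    rw [Finset.card_eq_zero, Finset.filter_eq_empty_iff]
    intro x _ hx
    exact hy.2 ⟨x, hx⟩
  have h2 : ∑ s ∈ (Finset.univ.filter (fun s : F => s ≠ 0 ∧ s ≠ 1)).filter
      (fun s : F => ∃ x : F, f x + s * x = g s),
      (Finset.univ.filter fun x : F => f x + s * x = g s).card
      = 2 * ((Finset.univ.filter (fun s : F => s ≠ 0 ∧ s ≠ 1)).filter
        (fun s : F => ∃ x : F, f x + s * x = g s)).card := by
    rw [Finset.sum_congr rfl (fun y hy => ?_), Finset.sum_const, smul_eq_mul, mul_comm]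
    simp only [Finset.mem_filter, Finset.mem_univ, true_and] at hy
    obtain ⟨⟨hy0, -⟩, x, hx⟩ := hy
    rcases h2to1 y hy0 (g y) with h | h
    · exfalso
      have : x ∈ Finset.univ.filter (fun x : F => f x + y * x = g y) := by
        simpa using hx
      rw [Finset.card_eq_zero] at h
      rw [h] at this
      exact absurd this (Finset.notMem_empty x)
    · exact h
  rw [hz, h2, add_zero]

lemma main_count (hbij : Function.Bijective f) (hf0 : f 0 = 0)
    (h2to1 : ∀ u : F, u ≠ 0 → ∀ y : F,
      (Finset.univ.filter (fun x : F => f x + u * x = y)).card = 0 ∨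
      (Finset.univ.filter (fun x : F => f x + u * x = y)).card = 2)
    (hvim : ∀ x : F, f x + x ≠ v) (hv0 : v ≠ 0) (htwo : (2 : F) = 0)
    (hq4 : 4 ≤ Fintype.card F) :
    (Finset.univ.filter fun u : Fin 3 → F => u ≠ 0 ∧ N f v u = 3).card
      = (3 * Fintype.card F + 8) * (Fintype.card F - 1) / 2 := by
  have hadd := hadd' (F := F) htwo
  set T0 := Finset.univ.filter (fun u : Fin 3 → F =>
    u ≠ 0 ∧ u 0 + u 1 = 0 ∧ v * u 1 + u 2 = 0 ∧ v * u 0 + u 2 = 0) with hT0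
  set T1 := Finset.univ.filter (fun u : Fin 3 → F =>
    u 0 + u 1 = 0 ∧ v * u 1 + u 2 ≠ 0 ∧ hc f u = 2) with hT1
  set T2 := Finset.univ.filter (fun u : Fin 3 → F =>
    v * u 1 + u 2 = 0 ∧ u 0 + u 1 ≠ 0 ∧ hc f u = 2) with hT2
  set T3 := Finset.univ.filter (fun u : Fin 3 → F =>
    v * u 0 + u 2 = 0 ∧ u 0 + u 1 ≠ 0 ∧ v * u 1 + u 2 ≠ 0 ∧ hc f u = 2) with hT3
  have hpart : (Finset.univ.filter fun u : Fin 3 → F => u ≠ 0 ∧ N f v u = 3)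
      = ((T0 ∪ T1) ∪ T2) ∪ T3 := by
    ext u
    simp only [hT0, hT1, hT2, hT3, Finset.mem_filter, Finset.mem_union, Finset.mem_univ,
      true_and]
    constructor
    · rintro ⟨hu, hN⟩
      have hoc := hyperoval_count f hbij h2to1 htwo u hu
      by_cases c1 : u 0 + u 1 = 0 <;> by_cases c2 : v * u 1 + u 2 = 0 <;>
        by_cases c3 : v * u 0 + u 2 = 0
      · exact Or.inl (Or.inl (Or.inl ⟨hu, c1, c2, c3⟩))
      · exact absurd (show v * u 0 + u 2 = 0 by rw [(hadd _ _).mp c1]; exact c2) c3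
      · exact absurd (show v * u 1 + u 2 = 0 by rw [← (hadd _ _).mp c1]; exact c3) c2
      · refine Or.inl (Or.inl (Or.inr ⟨c1, c2, ?_⟩))
        rw [N, if_pos c1, if_neg c2, if_neg c3] at hN
        omega
      · exfalso
        apply c1
        have hz : v * (u 0 + u 1) = 0 := by
          linear_combination c2 + c3 - u 2 * htwo
        exact (mul_eq_zero.mp hz).resolve_left hv0
      · refine Or.inl (Or.inr ⟨c2, c1, ?_⟩)
        rw [N, if_neg c1, if_pos c2, if_neg c3] at hN
        omega
      · refine Or.inr ⟨c3, c1, c2, ?_⟩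
        rw [N, if_neg c1, if_neg c2, if_pos c3] at hN
        omega
      · exfalso
        rw [N, if_neg c1, if_neg c2, if_neg c3] at hN
        omega
    · rintro (((⟨hne, c1, c2, c3⟩ | ⟨c1, c2, hc2⟩) | ⟨c2, c1, hc2⟩) | ⟨c3, c1, c2, hc2⟩)
      · -- T0
        refine ⟨hne, ?_⟩
        have h0 : u 0 ≠ 0 := by
          intro h0
          apply hne
          have h1 : u 1 = 0 := by rw [← (hadd _ _).mp c1, h0]
          have h2 : u 2 = 0 := by rw [← (hadd _ _).mp c2, h1, mul_zero]
          exact (eq_zero_iff3 u).mpr ⟨h0, h1, h2⟩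
        have e1 : u 1 = u 0 := ((hadd _ _).mp c1).symm
        have e2 : u 2 = v * u 1 := ((hadd _ _).mp c2).symm
        have hnA : nA f u = 0 := by
          rw [nA, Finset.card_eq_zero, Finset.filter_eq_empty_iff]
          intro x _
          rw [key_iff hadd h0 (show f x * u 0 + x * u 1 + u 2
            = u 0 * ((f x + 1 * x) + v) by rw [e2, e1]; field_simp)]
          rw [one_mul]
          exact hvim x
        rw [N, hc, hnA, if_neg h0, if_neg (e1 ▸ h0), if_pos c1, if_pos c2, if_pos c3]
      · -- T1
        have hu : u ≠ 0 := by
          rintro rfl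
          apply c2
          simp
        refine ⟨hu, ?_⟩
        have c3 : ¬ (v * u 0 + u 2 = 0) := by
          intro c3
          apply c2
          rw [← (hadd _ _).mp c1]
          exact c3
        rw [N, hc2, if_pos c1, if_neg c2, if_neg c3]
      · -- T2
        have hu : u ≠ 0 := by
          rintro rfl
          apply c1
          simp
        refine ⟨hu, ?_⟩
        have c3 : ¬ (v * u 0 + u 2 = 0) := by
          intro c3
          apply c1
          have hz : v * (u 0 + u 1) = 0 := by
            linear_combination c2 + c3 - u 2 * htwo
          exact (mul_eq_zero.mp hz).resolve_left hv0
        rw [N, hc2, if_neg c1, if_pos c2, if_neg c3]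
      · -- T3
        have hu : u ≠ 0 := by
          rintro rfl
          apply c1
          simp
        refine ⟨hu, ?_⟩
        rw [N, hc2, if_neg c1, if_neg c2, if_pos c3]
  have d01 : Disjoint T0 T1 := by
    rw [Finset.disjoint_left]
    intro u h0 h1
    simp only [hT0, hT1, Finset.mem_filter, Finset.mem_univ, true_and] at h0 h1
    exact h1.2.1 h0.2.2.1
  have d2 : Disjoint (T0 ∪ T1) T2 := by
    rw [Finset.disjoint_left]
    intro u h0 h1
    simp only [hT0, hT1, hT2, Finset.mem_filter, Finset.mem_univ, true_and,
      Finset.mem_union] at h0 h1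
    rcases h0 with h0 | h0
    · exact h1.2.1 h0.2.1
    · exact h1.2.1 h0.1
  have d3 : Disjoint ((T0 ∪ T1) ∪ T2) T3 := by
    rw [Finset.disjoint_left]
    intro u h0 h1
    simp only [hT0, hT1, hT2, hT3, Finset.mem_filter, Finset.mem_univ, true_and,
      Finset.mem_union] at h0 h1
    rcases h0 with (h0 | h0) | h0
    · exact h1.2.1 h0.2.1
    · exact h1.2.1 h0.1
    · exact h1.2.2.1 h0.1
  rw [hpart, Finset.card_union_of_disjoint d3, Finset.card_union_of_disjoint d2,
    Finset.card_union_of_disjoint d01, hT0, hT1, hT2, hT3,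
    cardT0 f v hvim hv0 htwo, cardT1 f v hbij h2to1 hvim hv0 htwo,
    cardT2 f v hbij h2to1 hvim hv0 htwo, cardT3 f v hbij h2to1 hvim hv0 htwo]
  -- arithmetic
  have hI := im_card f h2to1
  have hK2 := two_mul_filter_exists f h2to1 (fun s => v * s)
  rw [dc2 f v hbij hf0 hvim hv0 htwo] at hK2
  have hK3 := two_mul_filter_exists f h2to1 (fun _ => v)
  rw [dc3 f v hbij hf0 hvim hv0 htwo] at hK3
  set q := Fintype.card F with hqdef
  set I := (Finset.univ.filter fun y : F => ∃ x : F, f x + 1 * x = y).card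
  set K2 := (Finset.univ.filter fun s : F => (s ≠ 0 ∧ s ≠ 1) ∧ ∃ x : F, f x + s * x = v * s).card
  set K3 := (Finset.univ.filter fun s : F => (s ≠ 0 ∧ s ≠ 1) ∧ ∃ x : F, f x + s * x = v).card
  obtain ⟨c, hc'⟩ : ∃ c, I = c + 2 := ⟨I - 2, by omega⟩
  have hq2 : q = 2 * c + 4 := by omega
  have hK2' : K2 = c + 1 := by omega
  have hK3' : K3 = c + 1 := by omega
  have hq1 : q - 1 = 2 * c + 3 := by omega
  rw [hq1, hc', hK2', hK3', hq2]
  have hdiv : (3 * (2 * c + 4) + 8) * (2 * c + 3) / 2 = (3 * c + 10) * (2 * c + 3) := by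
    rw [show 3 * (2 * c + 4) + 8 = 2 * (3 * c + 10) by ring, mul_assoc]
    exact Nat.mul_div_cancel_left _ (by norm_num)
  rw [hdiv]
  ring

end Count

end Stmt16

open Stmt16 in
/-- for q = 2^m ≥ 4, with S the (q+5,3)-arc obtained from a
hyperoval by adding (1,1,0), (0,v,1), (v,0,1), the number of nonzero vectors
u ∈ F_q³ whose line H_u meets S in exactly 3 points equals (3q+8)(q−1)/2. -/
theorem stmt16 {F : Type*} [Field F] [Fintype F] [DecidableEq F] (m : ℕ)
    (hm : 2 ≤ m) (hq : Fintype.card F = 2 ^ m)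
    (f : F → F) (hbij : Function.Bijective f) (hf0 : f 0 = 0)
    (h2to1 : ∀ u : F, u ≠ 0 → ∀ y : F,
      (Finset.univ.filter (fun x : F => f x + u * x = y)).card = 0 ∨
      (Finset.univ.filter (fun x : F => f x + u * x = y)).card = 2)
    (v : F) (hv : v ∉ {y : F | ∃ x : F, f x + x = y})
    (S : Set (Projectivization F (Fin 3 → F)))
    (hS : S = (Set.range fun c : F =>
          Projectivization.mk F ![f c, c, 1] (by intro h; simpa using congrFun h 2))
        ∪ {Projectivization.mk F ![1, 0, 0] (by intro h; simpa using congrFun h 0),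
           Projectivization.mk F ![0, 1, 0] (by intro h; simpa using congrFun h 1),
           Projectivization.mk F ![1, 1, 0] (by intro h; simpa using congrFun h 0),
           Projectivization.mk F ![0, v, 1] (by intro h; simpa using congrFun h 2),
           Projectivization.mk F ![v, 0, 1] (by intro h; simpa using congrFun h 2)}) :
    {u : Fin 3 → F | u ≠ 0 ∧ {p ∈ S | ∑ i, p.rep i * u i = 0}.ncard = 3}.ncard
      = (3 * Fintype.card F + 8) * (Fintype.card F - 1) / 2 := by
  classical
  -- characteristic 2
  obtain ⟨p, hcp⟩ := CharP.exists F
  haveI := hcp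
  obtain ⟨n, hpp, hcard⟩ := FiniteField.card F p
  have hdvd : p ∣ 2 ^ m := by
    rw [← hq, hcard]
    exact dvd_pow_self p (PNat.pos n).ne'
  have hp2 : p = 2 := (Nat.prime_dvd_prime_iff_eq hpp Nat.prime_two).mp
    (hpp.dvd_of_dvd_pow hdvd)
  have htwo : (2 : F) = 0 := by
    have := CharP.cast_eq_zero F p
    rw [hp2] at this
    exact_mod_cast this
  have hvim : ∀ x : F, f x + x ≠ v := fun x h => hv ⟨x, h⟩
  have hv0 : v ≠ 0 := fun h => hv ⟨0, by rw [hf0, h, add_zero]⟩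
  have hq4 : 4 ≤ Fintype.card F := by
    rw [hq]
    calc (4:ℕ) = 2 ^ 2 := by norm_num
    _ ≤ 2 ^ m := Nat.pow_le_pow_right (by norm_num) hm
  -- S as a range
  have hrange : S = Set.range (fun d => Projectivization.mk F (vec f v d)
      (vec_ne_zero f v d)) := by
    rw [hS]
    ext q
    constructor
    · rintro (⟨c, rfl⟩ | h)
      · exact ⟨Sum.inl c, rfl⟩
      · simp only [Set.mem_insert_iff, Set.mem_singleton_iff] at h
        rcases h with rfl | rfl | rfl | rfl | rfl
        · exact ⟨Sum.inr 0, rfl⟩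
        · exact ⟨Sum.inr 1, rfl⟩
        · exact ⟨Sum.inr 2, rfl⟩
        · exact ⟨Sum.inr 3, rfl⟩
        · exact ⟨Sum.inr 4, rfl⟩
    · rintro ⟨x | j, rfl⟩
      · exact Or.inl ⟨x, rfl⟩
      · right
        fin_cases j
        · exact Or.inl rfl
        · exact Or.inr (Or.inl rfl)
        · exact Or.inr (Or.inr (Or.inl rfl))
        · exact Or.inr (Or.inr (Or.inr (Or.inl rfl)))
        · exact Or.inr (Or.inr (Or.inr (Or.inr rfl)))
  have hNu : ∀ u : Fin 3 → F,
      {p ∈ S | ∑ i, p.rep i * u i = 0}.ncard = N f v u := by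
    intro u
    rw [ncard_filter_eq f v hbij.injective hf0 hv0 S hrange u, count_eval f v u,
      N, hc, nA]
    ring
  have hset : {u : Fin 3 → F | u ≠ 0 ∧ {p ∈ S | ∑ i, p.rep i * u i = 0}.ncard = 3}
      = ↑(Finset.univ.filter fun u : Fin 3 → F => u ≠ 0 ∧ N f v u = 3) := by
    ext u
    simp only [Set.mem_setOf_eq, Finset.coe_filter, Finset.mem_univ, true_and,
      hNu u]
  rw [hset, Set.ncard_coe_finset,
    main_count f v hbij hf0 h2to1 hvim hv0 htwo hq4]
end

section
/- Let C be an [n, k, n−k] linear code over F_q (an AMDS code) whose dual is also AMDS (so C is NMDS), with 1 ≤ s ≤ k. Then the number A_{n−k+s} of codewords of C of weight n−k+s satisfies A_{n−k+s} = C(n, k−s)·∑_{j=0}^{s−1} (−1)^j C(n−k+s, j)(q^{s−j} − 1) + (−1)^s C(k, s)·A_{n−k}, where C(a,b) denotes the binomial coefficient. -/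
/-- Hamming weight of a word. -/
def codeWt {n : ℕ} {F : Type*} [Zero F] [DecidableEq F] (c : Fin n → F) : ℕ :=
  (Finset.univ.filter (fun i => c i ≠ 0)).card

/-- Dual code with respect to the standard bilinear form. -/
def dualCode {n : ℕ} {F : Type*} [Field F] (C : Submodule F (Fin n → F)) :
    Set (Fin n → F) :=
  {x | ∀ c ∈ C, ∑ i, x i * c i = 0}

/-!
Write `B(S)` (`numSupportedIn`) for the number of codewords supported in `S ⊆ [n]` and `E(S)`
(`numWithSupport`) for the number with support exactly `S`. Then `B(S) = ∑_{U ⊆ S} E(U)`, so by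
Möbius inversion on the Boolean lattice `E(T) = ∑_{S ⊆ T} (-1)^|T \ S| B(S)`. The two distances
determine `B`: if `|S| < n - k` only the zero word fits, if `|S| = n - k` then `B(S) = 1 + E(S)`,
and if `|S| > n - k` the dual distance `k` makes the restriction of `C` to the complement of `S`
surjective, so `B(S) = q^(|S| - (n - k))`. Summing the inversion formula over all `T` of size
`n - k + s`, every `S` of size `n - k` lies in `C(k, s)` of them, which produces the `A_{n-k}`
term; the rest is an alternating binomial sum.
-/

open Finset

namespace Finset

variable {α : Type*} [DecidableEq α]

theorem sum_Icc_neg_one_pow_card_sdiff {U T : Finset α} (hUT : U ⊆ T) :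
    ∑ S ∈ Icc U T, (-1 : ℤ) ^ #(T \ S) = if U = T then 1 else 0 := by
  rw [sum_nbij' (T \ ·) (T \ ·) (g := fun V => (-1 : ℤ) ^ #V) ?_ ?_ ?_ ?_ fun _ _ => rfl,
    sum_powerset_neg_one_pow_card]
  · exact if_congr (sdiff_eq_empty_iff_subset.trans ⟨hUT.antisymm, fun h => h ▸ subset_rfl⟩) rfl rfl
  · intro S hS
    simp only [mem_Icc, mem_powerset] at hS ⊢
    exact sdiff_subset_sdiff subset_rfl hS.1
  · intro V hV
    simp only [mem_Icc, mem_powerset] at hV ⊢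
    exact ⟨subset_sdiff.2 ⟨hUT, disjoint_of_subset_right hV disjoint_sdiff⟩, sdiff_subset⟩
  · intro S hS
    exact sdiff_sdiff_eq_self (mem_Icc.1 hS).2
  · intro V hV
    exact sdiff_sdiff_eq_self ((mem_powerset.1 hV).trans sdiff_subset)

theorem moebius_inversion_powerset {M : Type*} [AddCommGroup M] (f : Finset α → M)
    (T : Finset α) :
    ∑ S ∈ T.powerset, (-1 : ℤ) ^ #(T \ S) • ∑ U ∈ S.powerset, f U = f T := by
  calc _ = ∑ U ∈ T.powerset, (∑ S ∈ Icc U T, (-1 : ℤ) ^ #(T \ S)) • f U := by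
        simp_rw [smul_sum, sum_smul]
        exact sum_comm' fun S U => by simp only [mem_powerset, mem_Icc]; tauto
    _ = f T := by
        rw [sum_eq_single_of_mem T (mem_powerset_self T) fun U hU hne => by
          rw [sum_Icc_neg_one_pow_card_sdiff (mem_powerset.1 hU), if_neg hne, zero_smul]]
        simp

theorem sum_powersetCard_sum_powersetCard [Fintype α] {M : Type*} [AddCommMonoid M]
    (f : Finset α → M) {m w : ℕ} (hmw : m ≤ w) :
    ∑ T ∈ powersetCard w univ, ∑ S ∈ powersetCard m T, f S
      = (Fintype.card α - m).choose (w - m) • ∑ S ∈ powersetCard m univ, f S := by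
  rw [sum_comm' (t' := powersetCard m univ) (s' := fun S => {T ∈ powersetCard w univ | S ⊆ T})
    fun T S => by simp only [mem_powersetCard, mem_filter, subset_univ, true_and]; tauto, smul_sum]
  refine sum_congr rfl fun S hS => ?_
  rw [mem_powersetCard_univ] at hS
  rw [sum_const, card_filter_powersetCard_subset _ _ _ (subset_univ S) (hS ▸ hmw), card_univ, hS]

end Finset

theorem sum_range_neg_one_pow_mul_choose_mul_ite (d s : ℕ) (q : ℤ) (hds : d + s ≠ 0) :
    ∑ i ∈ range (d + s + 1),
        (-1) ^ (d + s - i) * ((d + s).choose i : ℤ) * (if i ≤ d then 1 else q ^ (i - d))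
      = ∑ j ∈ range s, (-1) ^ j * ((d + s).choose j : ℤ) * (q ^ (s - j) - 1) := by
  rw [← sum_range_reflect]
  calc _ = ∑ j ∈ range (d + s + 1), ((-1) ^ j * ((d + s).choose j : ℤ)
          + if j < s then (-1) ^ j * ((d + s).choose j : ℤ) * (q ^ (s - j) - 1) else 0) := by
        refine sum_congr rfl fun j hj => ?_
        have hj : j ≤ d + s := Nat.lt_succ_iff.1 (mem_range.1 hj)
        rw [add_tsub_cancel_right, Nat.sub_sub_self hj, Nat.choose_symm hj]
        split_ifs with h1 h2 h2
        · omega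
        · ring
        · rw [show d + s - j - d = s - j by omega]; ring
        · omega
    _ = _ := by
        rw [sum_add_distrib, Int.alternating_sum_range_choose_of_ne hds, zero_add, ← sum_filter]
        congr 1
        ext j
        simp only [mem_filter, mem_range]
        omega

section Code

variable {F : Type*} [Field F] [DecidableEq F] {n : ℕ}

def wordSupport (c : Fin n → F) : Finset (Fin n) := {i | c i ≠ 0}

theorem codeWt_eq_card_wordSupport (c : Fin n → F) : codeWt c = #(wordSupport c) := rfl

theorem wordSupport_eq_empty_iff {c : Fin n → F} : wordSupport c = ∅ ↔ c = 0 := by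
  simp [wordSupport, filter_eq_empty_iff, funext_iff]

theorem codeWt_eq_zero_iff {c : Fin n → F} : codeWt c = 0 ↔ c = 0 := by
  rw [codeWt_eq_card_wordSupport, card_eq_zero, wordSupport_eq_empty_iff]

theorem wordSupport_subset_iff {c : Fin n → F} {S : Finset (Fin n)} :
    wordSupport c ⊆ S ↔ ∀ i ∉ S, c i = 0 := by
  simp only [wordSupport, subset_iff, mem_filter, mem_univ, true_and]
  exact ⟨fun h i hi => by_contra fun hc => hi (h hc), fun h i hc => by_contra fun hi => hc (h i hi)⟩

variable (C : Submodule F (Fin n → F))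

noncomputable def codeRestrict (U : Finset (Fin n)) : C →ₗ[F] (U → F) :=
  (LinearMap.funLeft F F ((↑) : U → Fin n)).comp C.subtype

/-- A nonzero functional vanishing on the range, pulled back to `Fin n → F`, is the dot product
with a nonzero dual codeword supported in `U`. -/
theorem exists_mem_dualCode_codeWt_le_of_not_surjective {U : Finset (Fin n)}
    (h : ¬ Function.Surjective (codeRestrict C U)) :
    ∃ x ∈ dualCode C, x ≠ 0 ∧ codeWt x ≤ #U := by
  obtain ⟨φ, hφ0, hφ⟩ := (LinearMap.range (codeRestrict C U)).exists_le_ker_of_lt_top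
    (lt_top_iff_ne_top.2 (mt LinearMap.range_eq_top.1 h))
  set π := LinearMap.funLeft F F ((↑) : U → Fin n)
  set x : Fin n → F := fun i => (φ ∘ₗ π) fun j => if i = j then 1 else 0
  have hx : ∀ y, (φ ∘ₗ π) y = ∑ i, x i * y i := fun y => by
    simp only [LinearMap.pi_apply_eq_sum_univ (φ ∘ₗ π) y, x, smul_eq_mul, mul_comm]
  refine ⟨x, fun c hc => ?_, fun hx0 => hφ0 ?_, ?_⟩
  · rw [← hx]
    exact hφ ⟨⟨c, hc⟩, rfl⟩
  · refine LinearMap.ext fun y => ?_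
    obtain ⟨y, rfl⟩ := LinearMap.funLeft_surjective_of_injective F F _ Subtype.val_injective y
    simpa [hx0] using hx y
  · refine card_le_card fun i hi => by_contra fun hiU => (mem_filter.1 hi).2 ?_
    have : π (fun j => if i = j then 1 else 0) = 0 := by
      ext u
      simp only [π, LinearMap.funLeft_apply, Pi.zero_apply]
      exact if_neg fun h : i = u => hiU (h ▸ u.2)
    simp [x, this]

theorem codeRestrict_surjective {k : ℕ} (hDd : ∀ x ∈ dualCode C, x ≠ 0 → k ≤ codeWt x)
    {U : Finset (Fin n)} (hU : #U < k) : Function.Surjective (codeRestrict C U) := by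
  by_contra h
  obtain ⟨x, hx, hx0, hwt⟩ := exists_mem_dualCode_codeWt_le_of_not_surjective C h
  have := hDd x hx hx0
  omega

variable [Fintype F]

open Classical in
noncomputable def numWithSupport (S : Finset (Fin n)) : ℕ :=
  #{c | c ∈ C ∧ wordSupport c = S}

open Classical in
noncomputable def numSupportedIn (S : Finset (Fin n)) : ℕ :=
  #{c | c ∈ C ∧ wordSupport c ⊆ S}

open Classical in
theorem card_filter_wordSupport_mem (t : Finset (Finset (Fin n))) :
    #{c | c ∈ C ∧ wordSupport c ∈ t} = ∑ S ∈ t, numWithSupport C S := by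
  rw [card_eq_sum_card_fiberwise (f := wordSupport) fun c hc => (mem_filter.1 hc).2.2]
  refine sum_congr rfl fun S hS => ?_
  rw [numWithSupport, filter_filter]
  congr 1
  exact filter_congr fun c _ => ⟨fun h => ⟨h.1.1, h.2⟩, fun h => ⟨⟨h.1, h.2 ▸ hS⟩, h.2⟩⟩

theorem numSupportedIn_eq_sum (S : Finset (Fin n)) :
    numSupportedIn C S = ∑ U ∈ S.powerset, numWithSupport C U := by
  classical
  rw [← card_filter_wordSupport_mem, numSupportedIn]
  simp only [mem_powerset]

theorem ncard_codeWt_eq_sum (w : ℕ) :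
    {c ∈ (C : Set (Fin n → F)) | codeWt c = w}.ncard
      = ∑ S ∈ powersetCard w univ, numWithSupport C S := by
  classical
  rw [← card_filter_wordSupport_mem, ← Set.ncard_coe_finset]
  congr 1
  ext c
  simp [codeWt_eq_card_wordSupport]

theorem numWithSupport_empty : numWithSupport C ∅ = 1 := by
  classical
  rw [numWithSupport, card_eq_one]
  exact ⟨0, by ext c; simp +contextual [wordSupport_eq_empty_iff, C.zero_mem]⟩

theorem numWithSupport_eq_zero {d : ℕ} (hCd : ∀ c ∈ C, c ≠ 0 → d ≤ codeWt c)
    {S : Finset (Fin n)} (hS : S ≠ ∅) (hSd : #S < d) : numWithSupport C S = 0 := by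
  classical
  rw [numWithSupport, card_eq_zero, filter_eq_empty_iff]
  rintro c - ⟨hc, rfl⟩
  have := hCd c hc (mt wordSupport_eq_empty_iff.2 hS)
  rw [codeWt_eq_card_wordSupport] at this
  omega

theorem numSupportedIn_of_card_lt {d : ℕ} (hCd : ∀ c ∈ C, c ≠ 0 → d ≤ codeWt c)
    {S : Finset (Fin n)} (hSd : #S < d) : numSupportedIn C S = 1 := by
  rw [numSupportedIn_eq_sum, sum_eq_single_of_mem ∅ (empty_mem_powerset S) fun U hU hne =>
    numWithSupport_eq_zero C hCd hne ((card_le_card (mem_powerset.1 hU)).trans_lt hSd)]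
  exact numWithSupport_empty C

theorem numSupportedIn_of_card_eq {d : ℕ} (hCd : ∀ c ∈ C, c ≠ 0 → d ≤ codeWt c) (hd : 0 < d)
    {S : Finset (Fin n)} (hSd : #S = d) : numSupportedIn C S = 1 + numWithSupport C S := by
  have hS : ∅ ≠ S := by
    rintro rfl
    rw [card_empty] at hSd
    omega
  rw [numSupportedIn_eq_sum, sum_eq_add_of_mem ∅ S (empty_mem_powerset S) (mem_powerset_self S) hS
    fun U hU hne => numWithSupport_eq_zero C hCd hne.1
      (hSd ▸ card_lt_card (ssubset_of_subset_of_ne (mem_powerset.1 hU) hne.2)),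
    numWithSupport_empty]

theorem numSupportedIn_eq_card_ker (S : Finset (Fin n)) :
    numSupportedIn C S = Nat.card (LinearMap.ker (codeRestrict C Sᶜ)) := by
  classical
  rw [numSupportedIn, ← Fintype.card_subtype, ← Nat.card_eq_fintype_card]
  refine Nat.card_congr ((Equiv.subtypeSubtypeEquivSubtypeInter (· ∈ C) _).symm.trans
    (Equiv.subtypeEquivRight fun c => ?_))
  simp [funext_iff, codeRestrict, wordSupport_subset_iff]

theorem numSupportedIn_of_lt_card {k : ℕ} (hkn : k ≤ n) (hdim : Module.finrank F C = k)
    (hDd : ∀ x ∈ dualCode C, x ≠ 0 → k ≤ codeWt x) {S : Finset (Fin n)} (hS : n - k < #S) :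
    numSupportedIn C S = Fintype.card F ^ (#S - (n - k)) := by
  have hSn : #S ≤ n := by simpa using card_le_univ S
  have hU : #Sᶜ < k := by rw [card_compl, Fintype.card_fin]; omega
  have hrank := LinearMap.finrank_range_add_finrank_ker (codeRestrict C Sᶜ)
  rw [LinearMap.range_eq_top.2 (codeRestrict_surjective C hDd hU), finrank_top,
    Module.finrank_fintype_fun_eq_card, Fintype.card_coe, card_compl, Fintype.card_fin,
    hdim] at hrank
  rw [numSupportedIn_eq_card_ker, Module.natCard_eq_pow_finrank (K := F), Nat.card_eq_fintype_card]
  congr 1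
  omega

theorem numSupportedIn_eq {k : ℕ} (hk : k < n) (hdim : Module.finrank F C = k)
    (hCd : ∀ c ∈ C, c ≠ 0 → n - k ≤ codeWt c) (hDd : ∀ x ∈ dualCode C, x ≠ 0 → k ≤ codeWt x)
    (S : Finset (Fin n)) :
    (numSupportedIn C S : ℤ) = (if #S ≤ n - k then 1 else (Fintype.card F : ℤ) ^ (#S - (n - k)))
      + if #S = n - k then (numWithSupport C S : ℤ) else 0 := by
  rcases lt_trichotomy #S (n - k) with h | h | h
  · simp [numSupportedIn_of_card_lt C hCd h, h.le, h.ne]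
  · simp [numSupportedIn_of_card_eq C hCd (by omega) h, h]
  · simp [numSupportedIn_of_lt_card C hk.le hdim hDd h, h.not_ge, h.ne']

theorem numWithSupport_eq {k s : ℕ} (hk : k < n) (hdim : Module.finrank F C = k)
    (hCd : ∀ c ∈ C, c ≠ 0 → n - k ≤ codeWt c) (hDd : ∀ x ∈ dualCode C, x ≠ 0 → k ≤ codeWt x)
    {T : Finset (Fin n)} (hT : #T = n - k + s) :
    (numWithSupport C T : ℤ)
      = ∑ j ∈ range s,
          (-1) ^ j * ((n - k + s).choose j : ℤ) * ((Fintype.card F : ℤ) ^ (s - j) - 1)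
        + (-1) ^ s * ∑ S ∈ powersetCard (n - k) T, (numWithSupport C S : ℤ) := by
  have hinv := moebius_inversion_powerset (fun S => (numWithSupport C S : ℤ)) T
  simp only [← Nat.cast_sum, ← numSupportedIn_eq_sum] at hinv
  rw [← hinv]
  calc _ = ∑ S ∈ T.powerset, (-1) ^ (#T - #S) *
              (if #S ≤ n - k then 1 else (Fintype.card F : ℤ) ^ (#S - (n - k)))
          + ∑ S ∈ T.powerset, if #S = n - k then (-1) ^ s * (numWithSupport C S : ℤ) else 0 := by
        rw [← sum_add_distrib]
        refine sum_congr rfl fun S hS => ?_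
        rw [numSupportedIn_eq C hk hdim hCd hDd, card_sdiff_of_subset (mem_powerset.1 hS),
          smul_eq_mul, mul_add]
        by_cases h : #S = n - k
        · rw [if_pos h, if_pos h, h, hT, Nat.add_sub_cancel_left]
        · rw [if_neg h, if_neg h, mul_zero]
    _ = _ := by
        rw [sum_powerset_apply_card (fun i => (-1) ^ (#T - i) *
            (if i ≤ n - k then 1 else (Fintype.card F : ℤ) ^ (i - (n - k)))), hT,
          ← sum_range_neg_one_pow_mul_choose_mul_ite _ _ _ (by omega), powersetCard_eq_filter,
          sum_filter, mul_sum]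
        simp only [nsmul_eq_mul, mul_assoc, mul_left_comm, mul_ite, mul_zero]

end Code

theorem stmt17_general {F : Type*} [Field F] [Fintype F] [DecidableEq F]
    (n k s : ℕ) (hsk : s ≤ k)
    (C : Submodule F (Fin n → F))
    (hdim : Module.finrank F C = k)
    (hCd : ∀ c ∈ C, c ≠ 0 → n - k ≤ codeWt c)
    (hCd' : ∃ c ∈ C, c ≠ 0 ∧ codeWt c = n - k)
    (hDd : ∀ x ∈ dualCode C, x ≠ 0 → k ≤ codeWt x) :
    ({c ∈ (C : Set (Fin n → F)) | codeWt c = n - k + s}.ncard : ℤ)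
      = (n.choose (k - s) : ℤ) *
          ∑ j ∈ Finset.range s,
            (-1 : ℤ) ^ j * ((n - k + s).choose j : ℤ) * ((Fintype.card F : ℤ) ^ (s - j) - 1)
        + (-1 : ℤ) ^ s * (k.choose s : ℤ) *
            ({c ∈ (C : Set (Fin n → F)) | codeWt c = n - k}.ncard : ℤ) := by
  have hk : k < n := by
    obtain ⟨c, -, hc0, hc⟩ := hCd'
    by_contra h
    exact hc0 (codeWt_eq_zero_iff.1 (by omega))
  have hchoose : n.choose (n - k + s) = n.choose (k - s) := by
    rw [← Nat.choose_symm (by omega)]; congr 1; omega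
  have hsuper : (n - (n - k)).choose (n - k + s - (n - k)) = k.choose s := by
    congr 1 <;> omega
  rw [ncard_codeWt_eq_sum, ncard_codeWt_eq_sum, Nat.cast_sum, Nat.cast_sum,
    sum_congr rfl fun T hT => numWithSupport_eq C hk hdim hCd hDd (mem_powersetCard_univ.1 hT),
    sum_add_distrib, sum_const, card_powersetCard, card_univ, Fintype.card_fin, hchoose, ← mul_sum,
    sum_powersetCard_sum_powersetCard _ (by omega), Fintype.card_fin, hsuper, nsmul_eq_mul]
  ring

/-- weight distribution formula of an NMDS code, i.e. an
[n,k,n−k] code whose dual has minimum distance k. For 1 ≤ s ≤ k,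
A_{n−k+s} = C(n,k−s)·∑_{j<s} (−1)^j C(n−k+s,j)(q^{s−j}−1) + (−1)^s C(k,s)·A_{n−k}. -/
theorem stmt17 {F : Type*} [Field F] [Fintype F] [DecidableEq F]
    (n k s : ℕ) (hk : 3 ≤ k) (hkn : k ≤ n) (hs1 : 1 ≤ s) (hsk : s ≤ k)
    (C : Submodule F (Fin n → F))
    (hdim : Module.finrank F C = k)
    (hCd : ∀ c ∈ C, c ≠ 0 → n - k ≤ codeWt c)
    (hCd' : ∃ c ∈ C, c ≠ 0 ∧ codeWt c = n - k)
    (hDd : ∀ x ∈ dualCode C, x ≠ 0 → k ≤ codeWt x)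
    (hDd' : ∃ x ∈ dualCode C, x ≠ 0 ∧ codeWt x = k) :
    ({c ∈ (C : Set (Fin n → F)) | codeWt c = n - k + s}.ncard : ℤ)
      = (n.choose (k - s) : ℤ) *
          ∑ j ∈ Finset.range s,
            (-1 : ℤ) ^ j * ((n - k + s).choose j : ℤ) * ((Fintype.card F : ℤ) ^ (s - j) - 1)
        + (-1 : ℤ) ^ s * (k.choose s : ℤ) *
            ({c ∈ (C : Set (Fin n → F)) | codeWt c = n - k}.ncard : ℤ) :=
  stmt17_general n k s hsk C hdim hCd hCd' hDd
end
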